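/- arXiv:2211.11626 — 9 statements merged into one kernel-verified Lean document; each statement's English description precedes it below -/
import Mathlib

section
/- Let q be a prime power, m, n, k positive integers, and G a k×n matrix over 𝔽_{q^m}. If Y and Y' are matrices over 𝔽_q with n columns having the same row space over 𝔽_q, then the 𝔽_{q^m}-ranks of G·Yᵀ and G·Y'ᵀ are equal. Consequently the assignment ρ_G(V) = rk_{𝔽_{q^m}}(G·Yᵀ), where Y is any matrix over 𝔽_q whose row space is V, is a well-defined function on the lattice of 𝔽_q-subspaces of 𝔽_q^n. -/
open Module Matrix

/-- The row space (over `Fq`) of a matrix with rows indexed by `Fin y`. -/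
def rowSpace {Fq : Type*} [Field Fq] {y : ℕ} {ι : Type*} (Y : Matrix (Fin y) ι Fq) :
    Submodule Fq (ι → Fq) :=
  Submodule.span Fq (Set.range fun i => Y i)

lemma span_image_mono {Fq K : Type*} [Field Fq] [Field K] [Algebra Fq K]
    {α β : Type*} (L : (α → Fq) →ₗ[Fq] (β → K)) {S T : Set (α → Fq)}
    (h : Submodule.span Fq S ≤ Submodule.span Fq T) :
    Submodule.span K (L '' S) ≤ Submodule.span K (L '' T) := by
  apply Submodule.span_le.mpr
  rintro x ⟨v, hv, rfl⟩
  have hvT : v ∈ Submodule.span Fq T := h (Submodule.subset_span hv)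
  have h1 : L v ∈ Submodule.map L (Submodule.span Fq T) := Submodule.mem_map_of_mem hvT
  rw [Submodule.map_span] at h1
  have h2 : Submodule.span Fq (L '' T) ≤
      (Submodule.span K (L '' T)).restrictScalars Fq :=
    Submodule.span_le.mpr Submodule.subset_span
  exact h2 h1

lemma rank_eq_of_rowSpace_eq {Fq K : Type*} [Field Fq] [Field K] [Algebra Fq K]
    {n k : ℕ} (G : Matrix (Fin k) (Fin n) K)
    {y y' : ℕ} (Y : Matrix (Fin y) (Fin n) Fq) (Y' : Matrix (Fin y') (Fin n) Fq)
    (h : rowSpace Y = rowSpace Y') :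
    (G * (Y.map (algebraMap Fq K))ᵀ).rank = (G * (Y'.map (algebraMap Fq K))ᵀ).rank := by
  set L : (Fin n → Fq) →ₗ[Fq] (Fin n → K) := (Algebra.linearMap Fq K).compLeft (Fin n) with hL
  have key : ∀ (z : ℕ) (Z : Matrix (Fin z) (Fin n) Fq),
      LinearMap.range (G * (Z.map (algebraMap Fq K))ᵀ).mulVecLin
        = Submodule.map G.mulVecLin
            (Submodule.span K (L '' (Set.range fun i => Z i))) := by
    intro z Z
    rw [Matrix.mulVecLin_mul, LinearMap.range_comp, Matrix.range_mulVecLin,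
      Matrix.col_transpose, Matrix.row]
    have : (Set.range fun i => (Z.map (algebraMap Fq K)) i)
        = L '' (Set.range fun i => Z i) := by
      have : (fun i => (Z.map (algebraMap Fq K)) i) = L ∘ (fun i => Z i) := by
        funext i; rfl
      rw [this, Set.range_comp]
    rw [show Set.range (Z.map (algebraMap Fq K)) = L '' (Set.range fun i => Z i) from this]
  have hspan : Submodule.span K (L '' (Set.range fun i => Y i))
      = Submodule.span K (L '' (Set.range fun i => Y' i)) :=
    le_antisymm (span_image_mono L (le_of_eq h)) (span_image_mono L (le_of_eq h.symm))
  unfold Matrix.rank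
  rw [key, key, hspan]

/-- For `G ∈ 𝔽_{q^m}^{k×n}`, if two matrices over `𝔽_q` with `n` columns have
the same row space, then `G·Yᵀ` and `G·Y'ᵀ` have the same rank over `𝔽_{q^m}`; consequently
`ρ_G(V) = rk(G·Yᵀ)` (for any `Y` with row space `V`) is a well-defined function on the
lattice of `𝔽_q`-subspaces of `𝔽_q^n`. -/
theorem stmt0 (Fq K : Type*) [Field Fq] [Fintype Fq] [Field K] [Fintype K] [Algebra Fq K]
    (m n k : ℕ) (hm : 0 < m) (hn : 0 < n) (hk : 0 < k)
    (hdeg : Module.finrank Fq K = m)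
    (G : Matrix (Fin k) (Fin n) K) :
    (∀ (y y' : ℕ) (Y : Matrix (Fin y) (Fin n) Fq) (Y' : Matrix (Fin y') (Fin n) Fq),
      rowSpace Y = rowSpace Y' →
        (G * (Y.map (algebraMap Fq K))ᵀ).rank = (G * (Y'.map (algebraMap Fq K))ᵀ).rank) ∧
    ∃ ρ : Submodule Fq (Fin n → Fq) → ℕ,
      ∀ (y : ℕ) (Y : Matrix (Fin y) (Fin n) Fq),
        ρ (rowSpace Y) = (G * (Y.map (algebraMap Fq K))ᵀ).rank := by
  classical
  refine ⟨fun y y' Y Y' h => rank_eq_of_rowSpace_eq G Y Y' h, ?_⟩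
  refine ⟨fun V =>
    if h : ∃ p : Σ z : ℕ, Matrix (Fin z) (Fin n) Fq, rowSpace p.2 = V then
      (G * ((h.choose.2).map (algebraMap Fq K))ᵀ).rank else 0, ?_⟩
  intro y Y
  have hex : ∃ p : Σ z : ℕ, Matrix (Fin z) (Fin n) Fq, rowSpace p.2 = rowSpace Y :=
    ⟨⟨y, Y⟩, rfl⟩
  simp only [dif_pos hex]
  exact rank_eq_of_rowSpace_eq G _ Y hex.choose_spec
end

section
/- Let q be a prime power and G ∈ 𝔽_{q^m}^{k×n}. The map ρ_G on the lattice of 𝔽_q-subspaces of 𝔽_q^n defined by ρ_G(V) = rk_{𝔽_{q^m}}(G·Yᵀ), where Y is any matrix over 𝔽_q with row space V, satisfies: (R1) 0 ≤ ρ_G(V) ≤ dim V for all subspaces V; (R2) ρ_G(V) ≤ ρ_G(W) whenever V ≤ W; (R3) ρ_G(V+W) + ρ_G(V∩W) ≤ ρ_G(V) + ρ_G(W) for all subspaces V, W. Hence (𝔽_q^n, ρ_G) is a q-matroid. -/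
open Module Matrix

section Aux

variable {Fq K : Type*} [Field Fq] [Field K] [Algebra Fq K] {k n : ℕ}
  (G : Matrix (Fin k) (Fin n) K)

/-- The `Fq`-linear map `v ↦ G ⬝ φ(v)` where `φ` applies `algebraMap` entrywise. -/
noncomputable def gmap : (Fin n → Fq) →ₗ[Fq] (Fin k → K) :=
  (G.mulVecLin.restrictScalars Fq).comp ((Algebra.linearMap Fq K).compLeft (Fin n))

lemma gmap_apply (v : Fin n → Fq) :
    gmap G v = G.mulVec (fun j => algebraMap Fq K (v j)) := rfl

lemma span_image_span (S : Set (Fin n → Fq)) :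
    Submodule.span K (gmap G '' (Submodule.span Fq S : Set (Fin n → Fq)))
      = Submodule.span K (gmap G '' S) := by
  apply le_antisymm
  · rw [Submodule.span_le]
    rintro _ ⟨x, hx, rfl⟩
    have hx' : gmap G x ∈ Submodule.map (gmap G) (Submodule.span Fq S) :=
      Submodule.mem_map_of_mem hx
    rw [Submodule.map_span] at hx'
    have : Submodule.span Fq (gmap G '' S)
        ≤ (Submodule.span K (gmap G '' S)).restrictScalars Fq := by
      rw [Submodule.span_le]
      exact Submodule.subset_span
    exact this hx'
  · exact Submodule.span_mono (Set.image_mono Submodule.subset_span)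

/-- The rank of `G * (Y.map φ)ᵀ` equals the dimension of the `K`-span of the image of the
row space of `Y` under `gmap G`. -/
lemma rank_eq_span (y : ℕ) (Y : Matrix (Fin y) (Fin n) Fq) :
    (G * (Y.map (algebraMap Fq K))ᵀ).rank
      = finrank K (Submodule.span K (gmap G '' (rowSpace Y : Set (Fin n → Fq)))) := by
  rw [Matrix.rank_eq_finrank_span_cols, rowSpace, span_image_span]
  have hfun : (G * (Y.map (algebraMap Fq K))ᵀ)ᵀ = fun j => gmap G (Y j) := by
    funext j i
    simp [gmap_apply, Matrix.mul_apply, Matrix.mulVec, dotProduct,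
      Matrix.transpose_apply, Matrix.map_apply]
  have hset : (Set.range fun j => gmap G (Y j)) = gmap G '' Set.range (fun i => Y i) := by
    rw [← Set.range_comp]; rfl
  rw [show (G * (Y.map (algebraMap Fq K))ᵀ).col = (G * (Y.map (algebraMap Fq K))ᵀ)ᵀ from rfl]
  rw [hfun, hset]

/-- Every submodule of `Fin n → Fq` is the row space of a matrix with `finrank` rows. -/
lemma exists_rowSpace (V : Submodule Fq (Fin n → Fq)) :
    ∃ Y : Matrix (Fin (finrank Fq V)) (Fin n) Fq, rowSpace Y = V := by
  have : FiniteDimensional Fq V := FiniteDimensional.finiteDimensional_submodule V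
  let b := finBasis Fq V
  refine ⟨Matrix.of fun i => (b i : Fin n → Fq), ?_⟩
  show Submodule.span Fq (Set.range fun i => ((b i : V) : Fin n → Fq)) = V
  have : (Set.range fun i => ((b i : V) : Fin n → Fq)) = V.subtype '' Set.range b := by
    rw [← Set.range_comp]; rfl
  rw [this, Submodule.span_image, b.span_eq, Submodule.map_top, Submodule.range_subtype]

end Aux

/-- For `G ∈ 𝔽_{q^m}^{k×n}`, the map `ρ_G` (characterized by
`ρ_G(rs(Y)) = rk_{𝔽_{q^m}}(G·Yᵀ)`) satisfies (R1) `ρ_G(V) ≤ dim V`, (R2) monotonicity and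
(R3) submodularity; hence `(𝔽_q^n, ρ_G)` is a q-matroid. -/
theorem stmt1 (Fq K : Type*) [Field Fq] [Fintype Fq] [Field K] [Fintype K] [Algebra Fq K]
    (k n : ℕ) (G : Matrix (Fin k) (Fin n) K)
    (ρG : Submodule Fq (Fin n → Fq) → ℕ)
    (hρG : ∀ (y : ℕ) (Y : Matrix (Fin y) (Fin n) Fq),
      ρG (rowSpace Y) = (G * (Y.map (algebraMap Fq K))ᵀ).rank) :
    (∀ V : Submodule Fq (Fin n → Fq), ρG V ≤ finrank Fq V) ∧
    (∀ V W : Submodule Fq (Fin n → Fq), V ≤ W → ρG V ≤ ρG W) ∧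
    (∀ V W : Submodule Fq (Fin n → Fq), ρG (V ⊔ W) + ρG (V ⊓ W) ≤ ρG V + ρG W) := by
  -- key formula: ρG V = finrank of the K-span of the image of V under gmap G
  have key : ∀ V : Submodule Fq (Fin n → Fq),
      ρG V = finrank K (Submodule.span K (gmap G '' (V : Set (Fin n → Fq)))) := by
    intro V
    obtain ⟨Y, hY⟩ := exists_rowSpace V
    rw [← hY, hρG, rank_eq_span]
  refine ⟨?_, ?_, ?_⟩
  · -- R1
    intro V
    obtain ⟨Y, hY⟩ := exists_rowSpace V
    have h := hρG _ Y
    rw [hY] at h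
    rw [h]
    calc (G * (Y.map (algebraMap Fq K))ᵀ).rank ≤ Fintype.card (Fin (finrank Fq V)) :=
          Matrix.rank_le_card_width _
      _ = finrank Fq V := Fintype.card_fin _
  · -- R2
    intro V W hVW
    rw [key, key]
    exact Submodule.finrank_mono
      (Submodule.span_mono (Set.image_mono hVW))
  · -- R3
    intro V W
    rw [key, key, key, key]
    set SV := Submodule.span K (gmap G '' (V : Set (Fin n → Fq))) with hSV
    set SW := Submodule.span K (gmap G '' (W : Set (Fin n → Fq))) with hSW
    have hsup : Submodule.span K (gmap G '' ((V ⊔ W : Submodule Fq (Fin n → Fq)) :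
        Set (Fin n → Fq))) = SV ⊔ SW := by
      apply le_antisymm
      · rw [Submodule.span_le]
        rintro _ ⟨x, hx, rfl⟩
        obtain ⟨v, hv, w, hw, rfl⟩ := Submodule.mem_sup.mp hx
        rw [map_add]
        exact Submodule.add_mem_sup (Submodule.subset_span ⟨v, hv, rfl⟩)
          (Submodule.subset_span ⟨w, hw, rfl⟩)
      · refine sup_le ?_ ?_ <;>
          exact Submodule.span_mono (Set.image_mono (by simp))
    have hinf : Submodule.span K (gmap G '' ((V ⊓ W : Submodule Fq (Fin n → Fq)) :
        Set (Fin n → Fq))) ≤ SV ⊓ SW := by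
      refine le_inf ?_ ?_ <;>
        exact Submodule.span_mono (Set.image_mono (by simp))
    rw [hsup]
    calc finrank K (SV ⊔ SW : Submodule K (Fin k → K))
          + finrank K (Submodule.span K (gmap G '' ((V ⊓ W : Submodule Fq (Fin n → Fq)) :
            Set (Fin n → Fq))))
        ≤ finrank K (SV ⊔ SW : Submodule K (Fin k → K))
          + finrank K (SV ⊓ SW : Submodule K (Fin k → K)) :=
          Nat.add_le_add_left (Submodule.finrank_mono hinf) _
      _ = finrank K SV + finrank K SW := Submodule.finrank_sup_add_finrank_inf_eq SV SW
end

section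
/- Let 0 < k < n and G ∈ 𝔽_{q^m}^{k×n}. Then G represents the uniform q-matroid U_{k,n}(q), i.e. ρ_G(V) = min(k, dim V) for all 𝔽_q-subspaces V of 𝔽_q^n, if and only if rk_{𝔽_{q^m}}(G·Yᵀ) = k for every matrix Y ∈ 𝔽_q^{k×n} of rank k. -/
open Module Matrix

/-- Any linearly independent family can be extended to a larger linearly independent family
in a finite-dimensional space. -/
lemma exists_li_extend {F M : Type*} [Field F] [AddCommGroup M] [Module F M]
    [FiniteDimensional F M] {d : ℕ} (v : Fin d → M) (hv : LinearIndependent F v) :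
    ∀ (k : ℕ) (hdk : d ≤ k), k ≤ finrank F M →
      ∃ w : Fin k → M, LinearIndependent F w ∧ ∀ i : Fin d, w (Fin.castLE hdk i) = v i := by
  intro k hdk
  induction k, hdk using Nat.le_induction with
  | base =>
    intro _
    exact ⟨v, hv, fun i => by congr 1⟩
  | succ k hdk ih =>
    intro hk
    obtain ⟨w, hw, hwe⟩ := ih (by omega)
    obtain ⟨x, hx⟩ := exists_linearIndependent_snoc_of_lt_finrank hw (by omega)
    refine ⟨Fin.snoc w x, hx, fun i => ?_⟩
    have h1 : (Fin.castLE (by omega : d ≤ k + 1) i) = Fin.castSucc (Fin.castLE hdk i) :=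
      Fin.ext rfl
    rw [h1, Fin.snoc_castSucc, hwe]

/-- For `0 < k < n` and `G ∈ 𝔽_{q^m}^{k×n}`, `G` represents the uniform
q-matroid `U_{k,n}(q)` (i.e. `ρ_G(V) = min(k, dim V)` for all `V`) iff
`rk(G·Yᵀ) = k` for every `Y ∈ 𝔽_q^{k×n}` of rank `k`. -/
theorem stmt3 (Fq K : Type*) [Field Fq] [Fintype Fq] [Field K] [Fintype K] [Algebra Fq K]
    (k n : ℕ) (hk : 0 < k) (hkn : k < n)
    (G : Matrix (Fin k) (Fin n) K)
    (ρG : Submodule Fq (Fin n → Fq) → ℕ)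
    (hρG : ∀ (y : ℕ) (Y : Matrix (Fin y) (Fin n) Fq),
      ρG (rowSpace Y) = (G * (Y.map (algebraMap Fq K))ᵀ).rank) :
    (∀ V : Submodule Fq (Fin n → Fq), ρG V = min k (finrank Fq V)) ↔
      ∀ Y : Matrix (Fin k) (Fin n) Fq, Y.rank = k →
        (G * (Y.map (algebraMap Fq K))ᵀ).rank = k := by
  classical
  set σ := algebraMap Fq K with hσ
  set L : (Fin n → Fq) → (Fin k → K) := fun v => G.mulVec (fun j => σ (v j)) with hL
  have L_zero : L 0 = 0 := by
    simp only [hL, Pi.zero_apply, map_zero]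
    exact Matrix.mulVec_zero G
  have L_add : ∀ x y, L (x + y) = L x + L y := by
    intro x y
    have h1 : (fun j => σ ((x + y) j)) = (fun j => σ (x j)) + fun j => σ (y j) := by
      funext j; exact map_add σ _ _
    simp only [hL, h1, Matrix.mulVec_add]
  have L_smul : ∀ (c : Fq) x, L (c • x) = σ c • L x := by
    intro c x
    have h1 : (fun j => σ ((c • x) j)) = σ c • fun j => σ (x j) := by
      funext j
      simp only [Pi.smul_apply, smul_eq_mul, _root_.map_mul]
    simp only [hL, h1, Matrix.mulVec_smul]
  -- span of the image of a span
  have spanL : ∀ s : Set (Fin n → Fq),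
      Submodule.span K (L '' ((Submodule.span Fq s : Submodule Fq (Fin n → Fq)) : Set _)) =
        Submodule.span K (L '' s) := by
    intro s
    apply le_antisymm
    · rw [Submodule.span_le]
      rintro _ ⟨x, hx, rfl⟩
      induction hx using Submodule.span_induction with
      | mem x hx => exact Submodule.subset_span ⟨x, hx, rfl⟩
      | zero => rw [L_zero]; exact (Submodule.span K (L '' s)).zero_mem
      | add x y hx hy hLx hLy => rw [L_add]; exact (Submodule.span K (L '' s)).add_mem hLx hLy
      | smul c x hx hLx => rw [L_smul]; exact (Submodule.span K (L '' s)).smul_mem _ hLx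
    · exact Submodule.span_mono (Set.image_mono Submodule.subset_span)
  -- the rank of G * Yᵀ in terms of L
  have rankL : ∀ (y : ℕ) (Y : Matrix (Fin y) (Fin n) Fq),
      (G * (Y.map σ)ᵀ).rank =
        finrank K (Submodule.span K (L '' Set.range (fun i => Y i))) := by
    intro y Y
    have h0 : (G * (Y.map σ)ᵀ).rank
        = finrank K (LinearMap.range (G * (Y.map σ)ᵀ).mulVecLin) := rfl
    rw [h0, Matrix.mulVecLin_mul, LinearMap.range_comp, Matrix.range_mulVecLin,
      Submodule.map_span]
    change finrank K (Submodule.span K (⇑G.mulVecLin '' Set.range (Y.map ⇑σ).row)) = _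
    have hset : (⇑G.mulVecLin '' Set.range (Y.map ⇑σ).row) = L '' Set.range (fun i => Y i) := by
      rw [← Set.range_comp, ← Set.range_comp]; rfl
    rw [hset]
  -- rank of a matrix whose rows are linearly independent
  have rankFull : ∀ (j : ℕ) (v : Fin j → (Fin n → Fq)), LinearIndependent Fq v →
      (Matrix.of v).rank = j := by
    intro j v hv
    rw [Matrix.rank_eq_finrank_span_row]
    have h1 : Set.range (Matrix.of v).row = Set.range v := rfl
    rw [h1, finrank_span_eq_card hv, Fintype.card_fin]
  -- ρG in terms of L
  have ρval : ∀ V : Submodule Fq (Fin n → Fq),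
      ρG V = finrank K (Submodule.span K (L '' (V : Set (Fin n → Fq)))) := by
    intro V
    set b := Module.finBasis Fq V with hb
    set Y : Matrix (Fin (finrank Fq V)) (Fin n) Fq := Matrix.of fun i => (b i : Fin n → Fq)
      with hY
    have hrange : (Set.range fun i => Y i) = V.subtype '' Set.range b := by
      rw [← Set.range_comp]; rfl
    have hYV : Submodule.span Fq (Set.range fun i => Y i) = V := by
      rw [hrange, Submodule.span_image, b.span_eq, Submodule.map_subtype_top]
    have h2 : rowSpace Y = V := hYV
    calc ρG V = ρG (rowSpace Y) := by rw [h2]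
      _ = (G * (Y.map σ)ᵀ).rank := hρG _ Y
      _ = finrank K (Submodule.span K (L '' Set.range (fun i => Y i))) := rankL _ Y
      _ = finrank K (Submodule.span K
            (L '' ((Submodule.span Fq (Set.range fun i => Y i) : Submodule Fq _) : Set _))) := by
          rw [spanL]
      _ = finrank K (Submodule.span K (L '' (V : Set (Fin n → Fq)))) := by rw [hYV]
  have hambient : finrank K (Fin k → K) = k := Module.finrank_fin_fun K
  constructor
  · -- forward
    intro hall Y hY
    have h1 : finrank Fq (rowSpace Y) = k := by
      have := (Matrix.rank_eq_finrank_span_row Y).symm.trans hY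
      exact this
    rw [← hρG k Y, hall (rowSpace Y), h1, min_self]
  · -- backward
    intro hall V
    rw [ρval V]
    set d := finrank Fq V with hd
    set b := Module.finBasis Fq V with hb
    set bc : Fin d → (Fin n → Fq) := fun i => (b i : Fin n → Fq) with hbc
    have hbc_li : LinearIndependent Fq bc := b.linearIndependent.map' V.subtype V.ker_subtype
    have hbc_mem : ∀ i, bc i ∈ V := fun i => (b i).2
    have hrange : Set.range bc = V.subtype '' Set.range b := by
      rw [← Set.range_comp]; rfl
    have hVspan : Submodule.span Fq (Set.range bc) = V := by
      rw [hrange, Submodule.span_image, b.span_eq, Submodule.map_subtype_top]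
    rcases le_or_gt k d with hkd | hdk
    · -- dim V ≥ k
      rw [min_eq_left hkd]
      apply le_antisymm
      · simpa [hambient] using
          Submodule.finrank_le (Submodule.span K (L '' (V : Set (Fin n → Fq))))
      · set v : Fin k → (Fin n → Fq) := fun i => bc (Fin.castLE hkd i) with hv
        have hv_li : LinearIndependent Fq v := hbc_li.comp _ (Fin.castLE_injective hkd)
        have hZ := hall (Matrix.of v) (rankFull k v hv_li)
        rw [rankL k (Matrix.of v)] at hZ
        have hsub : Submodule.span K (L '' Set.range (fun i => (Matrix.of v) i)) ≤
            Submodule.span K (L '' (V : Set (Fin n → Fq))) := by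
          apply Submodule.span_mono
          apply Set.image_mono
          rintro _ ⟨i, rfl⟩
          exact hbc_mem _
        calc k = finrank K (Submodule.span K (L '' Set.range (fun i => (Matrix.of v) i))) :=
              hZ.symm
          _ ≤ finrank K (Submodule.span K (L '' (V : Set (Fin n → Fq)))) :=
              Submodule.finrank_mono hsub
    · -- dim V < k
      rw [min_eq_right hdk.le]
      apply le_antisymm
      · have h1 : (V : Set (Fin n → Fq)) =
            ((Submodule.span Fq (Set.range bc) : Submodule Fq _) : Set _) := by rw [hVspan]
        rw [h1, spanL, ← Set.range_comp]
        have := finrank_range_le_card (R := K) (L ∘ bc)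
        simpa [Set.finrank, Fintype.card_fin] using this
      · -- extend bc to a linearly independent family of size k
        have hfinrank : finrank Fq (Fin n → Fq) = n := Module.finrank_fin_fun Fq
        have hdn : d ≤ n := by
          have := Submodule.finrank_le V
          rwa [hfinrank] at this
        obtain ⟨w, hw_li, hwe⟩ := exists_li_extend bc hbc_li k hdk.le (by rw [hfinrank]; omega)
        have hZ := hall (Matrix.of w) (rankFull k w hw_li)
        rw [rankL k (Matrix.of w)] at hZ
        set u : Fin (k - d) → (Fin n → Fq) := fun j => w ⟨d + (j : ℕ), by omega⟩ with hu
        have hcover : Set.range (fun i => (Matrix.of w) i) ⊆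
            (V : Set (Fin n → Fq)) ∪ Set.range u := by
          rintro _ ⟨i, rfl⟩
          show w i ∈ _
          by_cases hi : (i : ℕ) < d
          · left
            have h2 : w i = bc ⟨(i : ℕ), hi⟩ := by
              rw [← hwe ⟨(i : ℕ), hi⟩]
              congr 1
            rw [h2]
            exact hbc_mem _
          · right
            have hidx : (⟨d + ((i : ℕ) - d), by omega⟩ : Fin k) = i :=
              Fin.ext (show d + ((i : ℕ) - d) = (i : ℕ) from by omega)
            exact ⟨⟨(i : ℕ) - d, by omega⟩, congrArg w hidx⟩
        have hle : Submodule.span K (L '' Set.range (fun i => (Matrix.of w) i)) ≤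
            Submodule.span K (L '' (V : Set (Fin n → Fq))) ⊔
              Submodule.span K (L '' Set.range u) := by
          rw [← Submodule.span_union, ← Set.image_union]
          exact Submodule.span_mono (Set.image_mono hcover)
        have h3 : finrank K (Submodule.span K (L '' Set.range u)) ≤ k - d := by
          rw [← Set.range_comp]
          have := finrank_range_le_card (R := K) (L ∘ u)
          simpa [Set.finrank, Fintype.card_fin] using this
        have h4 : k ≤ finrank K (Submodule.span K (L '' (V : Set (Fin n → Fq)))) + (k - d) := by
          calc k = finrank K (Submodule.span K (L '' Set.range (fun i => (Matrix.of w) i))) :=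
                hZ.symm
            _ ≤ finrank K ((Submodule.span K (L '' (V : Set (Fin n → Fq))) ⊔
                  Submodule.span K (L '' Set.range u) : Submodule K (Fin k → K))) :=
                Submodule.finrank_mono hle
            _ ≤ finrank K (Submodule.span K (L '' (V : Set (Fin n → Fq)))) +
                  finrank K (Submodule.span K (L '' Set.range u)) :=
                Submodule.finrank_add_le_finrank_add_finrank _ _
            _ ≤ _ := by omega
        omega
end

section
/- Let 0 < k < n. The uniform q-matroid U_{k,n}(q) is 𝔽_{q^m}-representable if and only if m ≥ n; that is, there exists a matrix G ∈ 𝔽_{q^m}^{k×n} with ρ_G(V) = min(k, dim V) for all 𝔽_q-subspaces V of 𝔽_q^n if and only if m ≥ n. -/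
open Module Matrix

section helpers

variable (Fq : Type*) {K : Type*} [Field Fq] [Fintype Fq] [Field K] [Fintype K] [Algebra Fq K]

theorem frob_add (i : ℕ) (x y : K) :
    (x + y) ^ Fintype.card Fq ^ i = x ^ Fintype.card Fq ^ i + y ^ Fintype.card Fq ^ i := by
  haveI : CharP Fq (ringChar Fq) := ringChar.charP Fq
  obtain ⟨e, hp, hcard⟩ := FiniteField.card Fq (ringChar Fq)
  haveI : Fact (ringChar Fq).Prime := ⟨hp⟩
  haveI : CharP K (ringChar Fq) :=
    charP_of_injective_algebraMap (algebraMap Fq K).injective _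
  rw [hcard, ← pow_mul]
  exact add_pow_char_pow x y _ _

omit [Fintype K] in
theorem frob_smul (i : ℕ) (t : Fq) (x : K) :
    (t • x) ^ Fintype.card Fq ^ i = t • x ^ Fintype.card Fq ^ i := by
  rw [Algebra.smul_def, mul_pow, ← map_pow, FiniteField.pow_card_pow, Algebra.smul_def]

/-- The `i`-th iterate of the `Fq`-Frobenius on `K`, as an `Fq`-linear map. -/
noncomputable def frobPow (i : ℕ) : K →ₗ[Fq] K where
  toFun x := x ^ Fintype.card Fq ^ i
  map_add' x y := frob_add Fq i x y
  map_smul' t x := frob_smul Fq i t x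

@[simp] theorem frobPow_apply (i : ℕ) (x : K) :
    frobPow Fq i x = x ^ Fintype.card Fq ^ i := rfl

end helpers

set_option linter.unusedSectionVars false

section moore

variable {Fq K : Type*} [Field Fq] [Fintype Fq] [Field K] [Fintype K] [Algebra Fq K]

theorem moore_det_ne_zero {s : ℕ} (γ : Fin s → K) (hγ : LinearIndependent Fq γ) :
    (Matrix.of fun i l : Fin s => γ l ^ Fintype.card Fq ^ (i : ℕ)).det ≠ 0 := by
  intro hdet
  obtain ⟨a, ha, haM⟩ := Matrix.exists_vecMul_eq_zero_iff.mpr hdet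
  have hQ1 : 1 < Fintype.card Fq := Fintype.one_lt_card
  set Q := Fintype.card Fq with hQ
  set g : K →ₗ[Fq] K := ∑ i : Fin s, a i • frobPow Fq (i : ℕ) with hg
  have hgapply : ∀ x : K, g x = ∑ i : Fin s, a i * x ^ Q ^ (i : ℕ) := by
    intro x
    simp [hg, smul_eq_mul, hQ]
  have hgγ : ∀ l, g (γ l) = 0 := by
    intro l
    have h1 := congrFun haM l
    simp only [Matrix.vecMul, dotProduct, Matrix.of_apply, Pi.zero_apply] at h1
    rw [hgapply]
    exact h1
  have hW : Submodule.span Fq (Set.range γ) ≤ LinearMap.ker g := by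
    rw [Submodule.span_le]
    rintro _ ⟨l, rfl⟩
    exact hgγ l
  set f : Polynomial K := ∑ i : Fin s, Polynomial.C (a i) * Polynomial.X ^ (Q ^ (i : ℕ))
    with hf
  have heval : ∀ x : K, f.eval x = ∑ i : Fin s, a i * x ^ Q ^ (i : ℕ) := by
    intro x; simp [hf, Polynomial.eval_finset_sum]
  obtain ⟨i₀, hi₀⟩ := Function.ne_iff.mp ha
  have hfne : f ≠ 0 := by
    intro h0
    have hc : f.coeff (Q ^ (i₀ : ℕ)) = a i₀ := by
      rw [hf, Polynomial.finset_sum_coeff, Finset.sum_eq_single i₀]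
      · simp
      · intro b _ hb
        simp only [Polynomial.coeff_C_mul, Polynomial.coeff_X_pow]
        rw [if_neg, mul_zero]
        intro hEq
        exact hb (Fin.ext (Nat.pow_right_injective hQ1 hEq.symm))
      · intro h; exact absurd (Finset.mem_univ i₀) h
    rw [h0] at hc
    simp only [Polynomial.coeff_zero] at hc
    exact hi₀ hc.symm
  have hs0 : 0 < s := i₀.pos
  have hdegf : f.natDegree < Q ^ s := by
    have h1 : f.natDegree ≤ Q ^ (s - 1) := by
      apply Polynomial.natDegree_sum_le_of_forall_le
      intro i _
      refine (Polynomial.natDegree_C_mul_le _ _).trans ?_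
      refine (Polynomial.natDegree_X_pow_le _).trans ?_
      exact Nat.pow_le_pow_right (Nat.one_le_of_lt hQ1) (by omega)
    exact lt_of_le_of_lt h1 (Nat.pow_lt_pow_right hQ1 (by omega))
  haveI : Module.Finite Fq K := Module.finite_iff_finite.mpr inferInstance
  set W := Submodule.span Fq (Set.range γ) with hWdef
  haveI : Fintype W := Fintype.ofFinite W
  have hcardW : Fintype.card W = Q ^ s := by
    rw [card_eq_pow_finrank (K := Fq) (V := W), finrank_span_eq_card hγ, Fintype.card_fin]
  have hzero : f = 0 := by
    apply Polynomial.eq_zero_of_natDegree_lt_card_of_eval_eq_zero f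
      (f := (Subtype.val : W → K)) Subtype.val_injective
    · intro x
      rw [heval, ← hgapply]
      exact hW x.2
    · exact hcardW ▸ hdegf
  exact hfne hzero

end moore

section moore2

variable {Fq K : Type*} [Field Fq] [Fintype Fq] [Field K] [Fintype K] [Algebra Fq K]

theorem moore_li {k s : ℕ} (hs : s ≤ k) (γ : Fin s → K) (hγ : LinearIndependent Fq γ) :
    LinearIndependent K fun l : Fin s => fun i : Fin k => γ l ^ Fintype.card Fq ^ (i : ℕ) := by
  have hdet := moore_det_ne_zero (Fq := Fq) γ hγ
  have hcols : LinearIndependent K fun l : Fin s =>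
      (Matrix.of fun i l : Fin s => γ l ^ Fintype.card Fq ^ (i : ℕ))ᵀ l :=
    Matrix.linearIndependent_cols_iff_isUnit.mpr
      ((Matrix.isUnit_iff_isUnit_det _).mpr (isUnit_iff_ne_zero.mpr hdet))
  exact LinearIndependent.of_comp (LinearMap.funLeft K K (Fin.castLE hs)) hcols

theorem moore_rank {k y : ℕ} (β : Fin y → K) :
    (Matrix.of fun (i : Fin k) (l : Fin y) => β l ^ Fintype.card Fq ^ (i : ℕ)).rank
      = min k (finrank Fq (Submodule.span Fq (Set.range β))) := by
  classical
  haveI : Module.Finite Fq K := Module.finite_iff_finite.mpr inferInstance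
  set Q := Fintype.card Fq with hQdef
  set W := Submodule.span Fq (Set.range β) with hW
  set r := finrank Fq W with hr
  let b : Basis (Fin r) Fq W := Module.finBasis Fq W
  let γ : Fin r → K := fun j => (b j : K)
  have hγ : LinearIndependent Fq γ :=
    b.linearIndependent.map' W.subtype (Submodule.ker_subtype W)
  have hγW : ∀ j, γ j ∈ W := fun j => (b j).2
  have hWspan : Submodule.span Fq (Set.range γ) = W := by
    have h1 : Submodule.map W.subtype (Submodule.span Fq (Set.range b))
        = Submodule.map W.subtype ⊤ := by rw [b.span_eq]
    rwa [Submodule.map_span, ← Set.range_comp, Submodule.map_top, Submodule.range_subtype] at h1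
  let μ : K →ₗ[Fq] (Fin k → K) := LinearMap.pi fun i : Fin k => frobPow Fq (i : ℕ)
  have keymem : ∀ (S : Set K) (v : K), v ∈ Submodule.span Fq S →
      μ v ∈ Submodule.span K (μ '' S) := by
    intro S v hv
    have h1 : μ v ∈ Submodule.map μ (Submodule.span Fq S) := Submodule.mem_map_of_mem hv
    rw [Submodule.map_span] at h1
    exact Submodule.span_le_restrictScalars Fq K (μ '' S) h1
  set A : Matrix (Fin k) (Fin y) K :=
    Matrix.of fun (i : Fin k) (l : Fin y) => β l ^ Q ^ (i : ℕ) with hA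
  have hrange : Set.range Aᵀ = μ '' Set.range β := by
    rw [← Set.range_comp]; rfl
  rw [Matrix.rank_eq_finrank_span_cols, show Set.range A.col = Set.range Aᵀ from rfl, hrange]
  set Scol := Submodule.span K (μ '' Set.range β) with hScol
  apply le_antisymm
  · apply le_min
    · refine (Submodule.finrank_le Scol).trans ?_
      rw [Module.finrank_fintype_fun_eq_card, Fintype.card_fin]
    · have hle : Scol ≤ Submodule.span K (Set.range fun j => μ (γ j)) := by
        rw [hScol, Submodule.span_le]
        rintro _ ⟨v, hv, rfl⟩
        have hvW : v ∈ W := by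
          rw [hW]; exact Submodule.subset_span hv
        rw [← hWspan] at hvW
        have := keymem _ v hvW
        rwa [← Set.range_comp] at this
      refine (Submodule.finrank_mono hle).trans ?_
      exact finrank_range_le_card _ |>.trans_eq (Fintype.card_fin r)
  · set d := min k r with hd
    let γ' : Fin d → K := fun j => γ (Fin.castLE (min_le_right k r) j)
    have hγ' : LinearIndependent Fq γ' :=
      hγ.comp _ (Fin.castLE_injective _)
    have hli : LinearIndependent K fun l : Fin d => fun i : Fin k => γ' l ^ Q ^ (i : ℕ) :=
      moore_li (min_le_left k r) γ' hγ'
    have hmem : ∀ j : Fin d, μ (γ' j) ∈ Scol := by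
      intro j
      apply keymem
      rw [← hW]
      exact hγW _
    let F' : Fin d → Scol := fun j => ⟨μ (γ' j), hmem j⟩
    have hF' : LinearIndependent K F' := by
      apply LinearIndependent.of_comp Scol.subtype
      exact hli
    have := hF'.fintype_card_le_finrank
    rwa [Fintype.card_fin] at this

end moore2

/-- For `0 < k < n`, the uniform q-matroid `U_{k,n}(q)` is
`𝔽_{q^m}`-representable iff `m ≥ n`: there exists `G ∈ 𝔽_{q^m}^{k×n}` with
`ρ_G(V) = min(k, dim V)` for all `𝔽_q`-subspaces `V` of `𝔽_q^n` iff `m ≥ n`. -/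
theorem stmt4 (Fq K : Type*) [Field Fq] [Fintype Fq] [Field K] [Fintype K] [Algebra Fq K]
    (m n k : ℕ) (hdeg : Module.finrank Fq K = m)
    (hk : 0 < k) (hkn : k < n) :
    (∃ G : Matrix (Fin k) (Fin n) K,
      ∀ (y : ℕ) (Y : Matrix (Fin y) (Fin n) Fq),
        (G * (Y.map (algebraMap Fq K))ᵀ).rank = min k (finrank Fq (rowSpace Y))) ↔
      n ≤ m := by
  classical
  haveI : Module.Finite Fq K := Module.finite_iff_finite.mpr inferInstance
  constructor
  · rintro ⟨G, hG⟩
    by_contra hnm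
    push_neg at hnm
    have hm1 : 1 ≤ m := hdeg ▸ Module.finrank_pos
    let bK : Basis (Fin m) Fq K := Module.finBasisOfFinrankEq Fq K hdeg
    set w := min m (n - k) with hwdef
    have hwm : w ≤ m := min_le_left _ _
    have hwnk : w ≤ n - k := min_le_right _ _
    set W : Submodule Fq K :=
      Submodule.span Fq (Set.range fun j : Fin w => bK (Fin.castLE hwm j)) with hWdef
    have hWrank : finrank Fq W = w := by
      have hind : LinearIndependent Fq fun j : Fin w => bK (Fin.castLE hwm j) :=
        bK.linearIndependent.comp _ (Fin.castLE_injective _)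
      rw [hWdef, finrank_span_eq_card hind, Fintype.card_fin]
    -- key: no nonzero x has all coordinates of x ᵥ* G inside W
    have hTker : ∀ x : Fin k → K, (∀ j, (x ᵥ* G) j ∈ W) → x = 0 := by
      intro x hx
      by_contra hxne
      set c : Fin n → K := x ᵥ* G with hc
      set L : (Fin n → Fq) →ₗ[Fq] K := Fintype.linearCombination Fq c with hL
      have hrangeL : LinearMap.range L ≤ W := by
        rintro _ ⟨v, rfl⟩
        rw [hL, Fintype.linearCombination_apply]
        exact Submodule.sum_mem _ fun j _ => W.smul_mem _ (hx j)
      have hrn := LinearMap.finrank_range_add_finrank_ker L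
      rw [Module.finrank_fintype_fun_eq_card, Fintype.card_fin] at hrn
      have hrle : finrank Fq (LinearMap.range L) ≤ w :=
        hWrank ▸ Submodule.finrank_mono hrangeL
      have hkerk : k ≤ finrank Fq (LinearMap.ker L) := by omega
      let bker : Basis (Fin (finrank Fq (LinearMap.ker L))) Fq (LinearMap.ker L) :=
        Module.finBasis Fq _
      let g : Fin k → (Fin n → Fq) := fun i => (bker (Fin.castLE hkerk i) : Fin n → Fq)
      have hgli : LinearIndependent Fq g :=
        (bker.linearIndependent.map' (LinearMap.ker L).subtype
          (Submodule.ker_subtype _)).comp _ (Fin.castLE_injective _)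
      have hgker : ∀ i, L (g i) = 0 := fun i => (bker (Fin.castLE hkerk i)).2
      set Y : Matrix (Fin k) (Fin n) Fq := Matrix.of g with hY
      have hrowY : finrank Fq (rowSpace Y) = k := by
        rw [rowSpace]
        exact (finrank_span_eq_card hgli).trans (Fintype.card_fin k)
      have hrank : (G * (Y.map (algebraMap Fq K))ᵀ).rank = k := by
        rw [hG k Y, hrowY, min_self]
      set A := G * (Y.map (algebraMap Fq K))ᵀ with hA
      have hvec : x ᵥ* A = 0 := by
        rw [hA, ← Matrix.vecMul_vecMul, Matrix.vecMul_transpose]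
        funext l
        have : (Y.map (algebraMap Fq K) *ᵥ (x ᵥ* G)) l = L (g l) := by
          rw [hL, Fintype.linearCombination_apply]
          simp only [Matrix.mulVec, dotProduct, Matrix.map_apply, hY, Matrix.of_apply]
          apply Finset.sum_congr rfl
          intro j _
          rw [Algebra.smul_def, hc]
        rw [← hc] at this
        rw [this, hgker l]
        rfl
      -- x is in the kernel of Aᵀ.mulVecLin
      have hxker : x ∈ LinearMap.ker Aᵀ.mulVecLin := by
        rw [LinearMap.mem_ker, Matrix.mulVecLin_apply, Matrix.mulVec_transpose, hvec]
      have hkerpos : finrank K (LinearMap.ker Aᵀ.mulVecLin) ≠ 0 := by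
        intro h0
        rw [Submodule.finrank_eq_zero] at h0
        rw [h0, Submodule.mem_bot] at hxker
        exact hxne hxker
      have hrn2 := LinearMap.finrank_range_add_finrank_ker Aᵀ.mulVecLin
      rw [Module.finrank_fintype_fun_eq_card, Fintype.card_fin] at hrn2
      have hAT : Aᵀ.rank = k := by rw [Matrix.rank_transpose, hrank]
      rw [Matrix.rank] at hAT
      omega
    -- the injective linear map
    let T : (Fin k → K) →ₗ[Fq] (Fin n → K ⧸ W) :=
      LinearMap.pi fun j => W.mkQ ∘ₗ
        ((LinearMap.proj j ∘ₗ G.vecMulLinear).restrictScalars Fq)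
    have hTinj : Function.Injective T := by
      rw [← LinearMap.ker_eq_bot, Submodule.eq_bot_iff]
      intro x hxk
      apply hTker
      intro j
      have := congrFun hxk j
      simpa [T, Submodule.Quotient.mk_eq_zero] using this
    have hdim := LinearMap.finrank_le_finrank_of_injective hTinj
    have hdom : finrank Fq (Fin k → K) = k * m := by
      rw [Module.finrank_pi_fintype, Finset.sum_const, Finset.card_univ, Fintype.card_fin,
        hdeg, smul_eq_mul]
    have hquot : finrank Fq (K ⧸ W) = m - w := by
      have h := Submodule.finrank_quotient_add_finrank W
      rw [hWrank, hdeg] at h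
      omega
    have hcod : finrank Fq (Fin n → K ⧸ W) = n * (m - w) := by
      rw [Module.finrank_pi_fintype, Finset.sum_const, Finset.card_univ, Fintype.card_fin,
        hquot, smul_eq_mul]
    rw [hdom, hcod] at hdim
    rcases le_or_gt m (n - k) with hc | hc
    · have hwm' : w = m := by omega
      rw [hwm', Nat.sub_self, Nat.mul_zero, Nat.le_zero] at hdim
      have : 0 < k * m := Nat.mul_pos hk hm1
      omega
    · set t := n - k with ht
      set u := m - t with hu
      have hw : w = t := by omega
      have hmtu : m = t + u := by omega
      have hn2 : n = k + t := by omega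
      have hun : u < k := by omega
      have htpos : 0 < t := by omega
      have h1 : m - w = u := by omega
      rw [h1] at hdim
      have h2 : k * (t + u) ≤ (k + t) * u := by rw [← hmtu, ← hn2]; exact hdim
      have h3 : t * (u + 1) ≤ t * k := Nat.mul_le_mul_left t (Nat.succ_le_of_lt hun)
      nlinarith
  · intro hnm
    let bK : Basis (Fin m) Fq K := Module.finBasisOfFinrankEq Fq K hdeg
    let α : Fin n → K := fun j => bK (Fin.castLE hnm j)
    have hα : LinearIndependent Fq α := bK.linearIndependent.comp _ (Fin.castLE_injective _)
    refine ⟨Matrix.of fun (i : Fin k) (j : Fin n) => α j ^ Fintype.card Fq ^ (i : ℕ), ?_⟩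
    intro y Y
    set β : Fin y → K := fun l => ∑ j, Y l j • α j with hβ
    have hprod : (Matrix.of fun (i : Fin k) (j : Fin n) => α j ^ Fintype.card Fq ^ (i : ℕ))
        * (Y.map (algebraMap Fq K))ᵀ
        = Matrix.of fun (i : Fin k) (l : Fin y) => β l ^ Fintype.card Fq ^ (i : ℕ) := by
      ext i l
      simp only [Matrix.mul_apply, Matrix.transpose_apply, Matrix.map_apply, Matrix.of_apply]
      have h1 : β l ^ Fintype.card Fq ^ (i : ℕ) = frobPow Fq (i : ℕ) (β l) := rfl
      rw [h1, hβ, map_sum]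
      apply Finset.sum_congr rfl
      intro j _
      rw [_root_.map_smul, frobPow_apply, Algebra.smul_def]
      ring
    rw [hprod, moore_rank]
    congr 1
    set L : (Fin n → Fq) →ₗ[Fq] K := Fintype.linearCombination Fq α with hL
    have hLinj : Function.Injective L := by
      rw [← LinearMap.ker_eq_bot, Submodule.eq_bot_iff]
      intro v hv
      rw [LinearMap.mem_ker, hL, Fintype.linearCombination_apply] at hv
      exact funext (Fintype.linearIndependent_iff.mp hα v hv)
    have hspan : Submodule.span Fq (Set.range β) = Submodule.map L (rowSpace Y) := by
      rw [rowSpace, Submodule.map_span, ← Set.range_comp]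
      rfl
    rw [hspan]
    exact ((Submodule.equivMapOfInjective L hLinj (rowSpace Y)).finrank_eq).symm
end

section
/- Let (E_i, ρ_i), i = 1,2, be q-matroids, E = E_1 ⊕ E_2 with projections π_i : E → E_i, and ρ'_i(V) = ρ_i(π_i(V)) for subspaces V of E. Define ρ(V) = dim V + min over all subspaces X ≤ V of (ρ'_1(X) + ρ'_2(X) − dim X). Then (E, ρ) is a q-matroid, i.e. ρ satisfies (R1) 0 ≤ ρ(V) ≤ dim V, (R2) ρ(V) ≤ ρ(W) whenever V ≤ W, and (R3) ρ(V+W) + ρ(V∩W) ≤ ρ(V) + ρ(W). -/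
/-! Write `h(X) = ρ₁(π₁ X) + ρ₂(π₂ X)`, so that `ρ(V) = dim V + min_{X ≤ V} (h X − dim X)`.
Since the `ρᵢ` are monotone and submodular and `π₁, π₂` preserve joins and do not shrink meets,
`h` is monotone and submodular. Any such `h` with `h ≥ 0` and `h(0) = 0` induces a rank function
this way: for (R2) replace a minimiser `X ≤ W` by `X ⊓ V`, for (R3) combine minimisers `X ≤ V`,
`Y ≤ W` into `X ⊔ Y ≤ V ⊔ W` and `X ⊓ Y ≤ V ⊓ W`, using the modular law for `dim`. -/

open Module

/-- The rank function of the direct sum of two q-matroids `(E₁, ρ₁)`, `(E₂, ρ₂)` on the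
ground space `E₁ × E₂`, as an integer:
`ρ(V) = dim V + min_{X ≤ V} (ρ₁(π₁(X)) + ρ₂(π₂(X)) − dim X)`. -/
noncomputable def dsRank {Fq E₁ E₂ : Type*} [Field Fq]
    [AddCommGroup E₁] [Module Fq E₁] [AddCommGroup E₂] [Module Fq E₂]
    (ρ₁ : Submodule Fq E₁ → ℕ) (ρ₂ : Submodule Fq E₂ → ℕ)
    (V : Submodule Fq (E₁ × E₂)) : ℤ :=
  (finrank Fq V : ℤ) +
    sInf {z : ℤ | ∃ X : Submodule Fq (E₁ × E₂), X ≤ V ∧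
      z = (ρ₁ (X.map (LinearMap.fst Fq E₁ E₂)) : ℤ) + (ρ₂ (X.map (LinearMap.snd Fq E₁ E₂)) : ℤ)
            - (finrank Fq X : ℤ)}

section InducedRank

variable {K M : Type*} [Field K] [AddCommGroup M] [Module K M]

noncomputable def inducedRank (h : Submodule K M → ℤ) (V : Submodule K M) : ℤ :=
  finrank K V + sInf ((fun X => h X - finrank K X) '' Set.Iic V)

variable [FiniteDimensional K M] {h : Submodule K M → ℤ} (h_nonneg : ∀ X, 0 ≤ h X)
include h_nonneg

lemma bddBelow_image_Iic (V : Submodule K M) :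
    BddBelow ((fun X => h X - finrank K X) '' Set.Iic V) := by
  refine ⟨-finrank K V, ?_⟩
  rintro _ ⟨X, hXV, rfl⟩
  have := Submodule.finrank_mono (Set.mem_Iic.mp hXV)
  have := h_nonneg X
  simp only
  omega

lemma inducedRank_le {V X : Submodule K M} (hXV : X ≤ V) :
    inducedRank h V ≤ finrank K V + (h X - finrank K X) :=
  add_le_add_right (csInf_le (bddBelow_image_Iic h_nonneg V) ⟨X, hXV, rfl⟩) _

lemma exists_inducedRank_eq (V : Submodule K M) :
    ∃ X ≤ V, inducedRank h V = finrank K V + (h X - finrank K X) := by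
  obtain ⟨X, hXV, hX⟩ := Int.csInf_mem (Set.image_nonempty.mpr Set.nonempty_Iic)
    (bddBelow_image_Iic h_nonneg V)
  exact ⟨X, hXV, by rw [inducedRank, ← hX]⟩

lemma inducedRank_nonneg (V : Submodule K M) : 0 ≤ inducedRank h V := by
  obtain ⟨X, hXV, hX⟩ := exists_inducedRank_eq h_nonneg V
  have := Submodule.finrank_mono hXV
  have := h_nonneg X
  omega

lemma inducedRank_le_finrank (h_bot : h ⊥ = 0) (V : Submodule K M) :
    inducedRank h V ≤ finrank K V := by
  simpa [h_bot] using inducedRank_le h_nonneg (bot_le : ⊥ ≤ V)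

lemma inducedRank_mono (h_mono : Monotone h) : Monotone (inducedRank h) := by
  intro V W hVW
  obtain ⟨X, hXW, hX⟩ := exists_inducedRank_eq h_nonneg W
  have := inducedRank_le h_nonneg (inf_le_right : X ⊓ V ≤ V)
  have := h_mono (inf_le_left : X ⊓ V ≤ X)
  have := Submodule.finrank_sup_add_finrank_inf_eq X V
  have := Submodule.finrank_mono (sup_le hXW hVW)
  omega

lemma inducedRank_submodular (h_sub : ∀ X Y, h (X ⊔ Y) + h (X ⊓ Y) ≤ h X + h Y)
    (V W : Submodule K M) :
    inducedRank h (V ⊔ W) + inducedRank h (V ⊓ W) ≤ inducedRank h V + inducedRank h W := by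
  obtain ⟨X, hXV, hX⟩ := exists_inducedRank_eq h_nonneg V
  obtain ⟨Y, hYW, hY⟩ := exists_inducedRank_eq h_nonneg W
  have := inducedRank_le h_nonneg (sup_le_sup hXV hYW)
  have := inducedRank_le h_nonneg (inf_le_inf hXV hYW)
  have := Submodule.finrank_sup_add_finrank_inf_eq X Y
  have := Submodule.finrank_sup_add_finrank_inf_eq V W
  have := h_sub X Y
  omega

end InducedRank

lemma map_sup_add_map_inf_le {R M N : Type*} [Semiring R] [AddCommMonoid M] [Module R M]
    [AddCommMonoid N] [Module R N] {ρ : Submodule R N → ℕ} (hρ_mono : Monotone ρ)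
    (hρ_sub : ∀ V W, ρ (V ⊔ W) + ρ (V ⊓ W) ≤ ρ V + ρ W) (f : M →ₗ[R] N) (X Y : Submodule R M) :
    ρ ((X ⊔ Y).map f) + ρ ((X ⊓ Y).map f) ≤ ρ (X.map f) + ρ (Y.map f) := by
  rw [Submodule.map_sup]
  exact (add_le_add_right (hρ_mono (Submodule.map_inf_le f)) _).trans (hρ_sub _ _)

lemma dsRank_eq_inducedRank {K E₁ E₂ : Type*} [Field K] [AddCommGroup E₁] [Module K E₁]
    [AddCommGroup E₂] [Module K E₂] (ρ₁ : Submodule K E₁ → ℕ) (ρ₂ : Submodule K E₂ → ℕ) :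
    dsRank ρ₁ ρ₂ = inducedRank fun X =>
      (ρ₁ (X.map (LinearMap.fst K E₁ E₂)) : ℤ) + ρ₂ (X.map (LinearMap.snd K E₁ E₂)) := by
  ext V
  simp only [dsRank, inducedRank, Set.image, Set.mem_Iic, eq_comm, add_sub_assoc]

theorem stmt6_general (Fq E₁ E₂ : Type*) [Field Fq]
    [AddCommGroup E₁] [Module Fq E₁] [FiniteDimensional Fq E₁]
    [AddCommGroup E₂] [Module Fq E₂] [FiniteDimensional Fq E₂]
    (ρ₁ : Submodule Fq E₁ → ℕ) (ρ₂ : Submodule Fq E₂ → ℕ)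
    (hR1₁ : ∀ V : Submodule Fq E₁, ρ₁ V ≤ finrank Fq V)
    (hR2₁ : ∀ V W : Submodule Fq E₁, V ≤ W → ρ₁ V ≤ ρ₁ W)
    (hR3₁ : ∀ V W : Submodule Fq E₁, ρ₁ (V ⊔ W) + ρ₁ (V ⊓ W) ≤ ρ₁ V + ρ₁ W)
    (hR1₂ : ∀ V : Submodule Fq E₂, ρ₂ V ≤ finrank Fq V)
    (hR2₂ : ∀ V W : Submodule Fq E₂, V ≤ W → ρ₂ V ≤ ρ₂ W)
    (hR3₂ : ∀ V W : Submodule Fq E₂, ρ₂ (V ⊔ W) + ρ₂ (V ⊓ W) ≤ ρ₂ V + ρ₂ W) :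
    (∀ V : Submodule Fq (E₁ × E₂),
        0 ≤ dsRank ρ₁ ρ₂ V ∧ dsRank ρ₁ ρ₂ V ≤ (finrank Fq V : ℤ)) ∧
    (∀ V W : Submodule Fq (E₁ × E₂), V ≤ W → dsRank ρ₁ ρ₂ V ≤ dsRank ρ₁ ρ₂ W) ∧
    (∀ V W : Submodule Fq (E₁ × E₂),
        dsRank ρ₁ ρ₂ (V ⊔ W) + dsRank ρ₁ ρ₂ (V ⊓ W) ≤ dsRank ρ₁ ρ₂ V + dsRank ρ₁ ρ₂ W) := by
  set π₁ := LinearMap.fst Fq E₁ E₂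
  set π₂ := LinearMap.snd Fq E₁ E₂
  set h : Submodule Fq (E₁ × E₂) → ℤ := fun X => (ρ₁ (X.map π₁) : ℤ) + ρ₂ (X.map π₂)
  have h_nonneg : ∀ X, 0 ≤ h X := fun X => by positivity
  have h_bot : h ⊥ = 0 := by
    have := hR1₁ ⊥
    have := hR1₂ ⊥
    simp_all [h]
  have h_mono : Monotone h := fun X Y hXY => by
    have := hR2₁ _ _ (Submodule.map_mono (f := π₁) hXY)
    have := hR2₂ _ _ (Submodule.map_mono (f := π₂) hXY)
    simp only [h]
    omega
  have h_sub : ∀ X Y, h (X ⊔ Y) + h (X ⊓ Y) ≤ h X + h Y := fun X Y => by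
    have := map_sup_add_map_inf_le (fun V W => hR2₁ V W) hR3₁ π₁ X Y
    have := map_sup_add_map_inf_le (fun V W => hR2₂ V W) hR3₂ π₂ X Y
    simp only [h]
    omega
  rw [dsRank_eq_inducedRank]
  exact ⟨fun V => ⟨inducedRank_nonneg h_nonneg V, inducedRank_le_finrank h_nonneg h_bot V⟩,
    fun V W => (inducedRank_mono h_nonneg h_mono ·), inducedRank_submodular h_nonneg h_sub⟩

/-- The direct sum rank function `ρ` of two q-matroids `(E₁, ρ₁)` and
`(E₂, ρ₂)` is a q-matroid rank function on `E = E₁ ⊕ E₂`: it satisfies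
(R1) `0 ≤ ρ(V) ≤ dim V`, (R2) monotonicity, and (R3) submodularity. -/
theorem stmt6 (Fq E₁ E₂ : Type*) [Field Fq] [Fintype Fq]
    [AddCommGroup E₁] [Module Fq E₁] [FiniteDimensional Fq E₁]
    [AddCommGroup E₂] [Module Fq E₂] [FiniteDimensional Fq E₂]
    (ρ₁ : Submodule Fq E₁ → ℕ) (ρ₂ : Submodule Fq E₂ → ℕ)
    (hR1₁ : ∀ V : Submodule Fq E₁, ρ₁ V ≤ finrank Fq V)
    (hR2₁ : ∀ V W : Submodule Fq E₁, V ≤ W → ρ₁ V ≤ ρ₁ W)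
    (hR3₁ : ∀ V W : Submodule Fq E₁, ρ₁ (V ⊔ W) + ρ₁ (V ⊓ W) ≤ ρ₁ V + ρ₁ W)
    (hR1₂ : ∀ V : Submodule Fq E₂, ρ₂ V ≤ finrank Fq V)
    (hR2₂ : ∀ V W : Submodule Fq E₂, V ≤ W → ρ₂ V ≤ ρ₂ W)
    (hR3₂ : ∀ V W : Submodule Fq E₂, ρ₂ (V ⊔ W) + ρ₂ (V ⊓ W) ≤ ρ₂ V + ρ₂ W) :
    (∀ V : Submodule Fq (E₁ × E₂),
        0 ≤ dsRank ρ₁ ρ₂ V ∧ dsRank ρ₁ ρ₂ V ≤ (finrank Fq V : ℤ)) ∧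
    (∀ V W : Submodule Fq (E₁ × E₂), V ≤ W → dsRank ρ₁ ρ₂ V ≤ dsRank ρ₁ ρ₂ W) ∧
    (∀ V W : Submodule Fq (E₁ × E₂),
        dsRank ρ₁ ρ₂ (V ⊔ W) + dsRank ρ₁ ρ₂ (V ⊓ W) ≤ dsRank ρ₁ ρ₂ V + dsRank ρ₁ ρ₂ W) :=
  stmt6_general Fq E₁ E₂ ρ₁ ρ₂ hR1₁ hR2₁ hR3₁ hR1₂ hR2₂ hR3₂
end

section
/- Let M_1 ⊕ M_2 = (E, ρ) be the direct sum of q-matroids M_i = (E_i, ρ_i), and set 𝒳 = {X ≤ E : X ≠ 0 and ρ_1(π_1(X)) + ρ_2(π_2(X)) < dim X}. Then the circuits of M_1 ⊕ M_2 are exactly the inclusion-minimal elements of 𝒳. -/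
open Module

/-- The set `𝒳` of nonzero subspaces `X` of `E₁ × E₂` with
`ρ₁(π₁(X)) + ρ₂(π₂(X)) < dim X`. -/
def memX {Fq E₁ E₂ : Type*} [Field Fq]
    [AddCommGroup E₁] [Module Fq E₁] [AddCommGroup E₂] [Module Fq E₂]
    (ρ₁ : Submodule Fq E₁ → ℕ) (ρ₂ : Submodule Fq E₂ → ℕ)
    (X : Submodule Fq (E₁ × E₂)) : Prop :=
  X ≠ ⊥ ∧
    ρ₁ (X.map (LinearMap.fst Fq E₁ E₂)) + ρ₂ (X.map (LinearMap.snd Fq E₁ E₂)) < finrank Fq X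

/-! Writing `ρ(V) = dim V + min_{X ≤ V} e(X)` with `e(X) = ρ₁(π₁X) + ρ₂(π₂X) − dim X` and
`e(0) = 0`, a space is dependent in `M₁ ⊕ M₂` exactly when some `X ≤ V` has `e(X) < 0`, i.e.
when `V` contains a member of `𝒳`. Dependence is therefore the upward closure of membership in
`𝒳`, and an upward closure has the same minimal elements as the property it is generated by. -/

theorem minimal_exists_le_iff {α : Type*} [PartialOrder α] {P : α → Prop} {a : α} :
    Minimal (fun x ↦ ∃ y ≤ x, P y) a ↔ Minimal P a := by
  constructor
  · rintro ⟨⟨b, hba, hb⟩, hmin⟩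
    obtain rfl : b = a := le_antisymm hba (hmin ⟨b, le_rfl, hb⟩ hba)
    exact ⟨hb, fun c hc hca ↦ hmin ⟨c, le_rfl, hc⟩ hca⟩
  · rintro ⟨ha, hmin⟩
    exact ⟨⟨a, le_rfl, ha⟩, fun b ⟨c, hcb, hc⟩ hba ↦ (hmin hc (hcb.trans hba)).trans hcb⟩

section DirectSum

variable {Fq E₁ E₂ : Type*} [Field Fq]
    [AddCommGroup E₁] [Module Fq E₁] [AddCommGroup E₂] [Module Fq E₂]
    (ρ₁ : Submodule Fq E₁ → ℕ) (ρ₂ : Submodule Fq E₂ → ℕ)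

noncomputable def dsExcess (X : Submodule Fq (E₁ × E₂)) : ℤ :=
  (ρ₁ (X.map (LinearMap.fst Fq E₁ E₂)) : ℤ) + (ρ₂ (X.map (LinearMap.snd Fq E₁ E₂)) : ℤ)
    - (finrank Fq X : ℤ)

theorem dsRank_eq_finrank_add_sInf (V : Submodule Fq (E₁ × E₂)) :
    dsRank ρ₁ ρ₂ V = finrank Fq V + sInf (dsExcess ρ₁ ρ₂ '' Set.Iic V) := by
  unfold dsRank
  congr 2
  ext z
  simp only [Set.mem_ofPred_eq, Set.mem_image, Set.mem_Iic, dsExcess, eq_comm]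

variable {ρ₁ ρ₂}

theorem dsExcess_bot (h₁ : ρ₁ ⊥ = 0) (h₂ : ρ₂ ⊥ = 0) : dsExcess ρ₁ ρ₂ ⊥ = 0 := by
  simp [dsExcess, h₁, h₂]

theorem memX_iff_dsExcess_neg (h₁ : ρ₁ ⊥ = 0) (h₂ : ρ₂ ⊥ = 0) (X : Submodule Fq (E₁ × E₂)) :
    memX ρ₁ ρ₂ X ↔ dsExcess ρ₁ ρ₂ X < 0 := by
  have hlt : memX ρ₁ ρ₂ X ↔ X ≠ ⊥ ∧ dsExcess ρ₁ ρ₂ X < 0 := by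
    unfold memX dsExcess
    exact and_congr_right fun _ ↦ by omega
  rw [hlt, and_iff_right_iff_imp]
  rintro hneg rfl
  simp [dsExcess_bot h₁ h₂] at hneg

variable [FiniteDimensional Fq E₁] [FiniteDimensional Fq E₂]

theorem bddBelow_dsExcess_image_Iic (V : Submodule Fq (E₁ × E₂)) :
    BddBelow (dsExcess ρ₁ ρ₂ '' Set.Iic V) := by
  refine ⟨-(finrank Fq V : ℤ), ?_⟩
  rintro _ ⟨X, hXV, rfl⟩
  have hdim : finrank Fq X ≤ finrank Fq V := Submodule.finrank_mono hXV
  unfold dsExcess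
  omega

theorem dsRank_le_finrank (h₁ : ρ₁ ⊥ = 0) (h₂ : ρ₂ ⊥ = 0) (V : Submodule Fq (E₁ × E₂)) :
    dsRank ρ₁ ρ₂ V ≤ finrank Fq V := by
  have hzero : dsExcess ρ₁ ρ₂ ⊥ ∈ dsExcess ρ₁ ρ₂ '' Set.Iic V := ⟨⊥, Set.mem_Iic.mpr bot_le, rfl⟩
  have hle := csInf_le (bddBelow_dsExcess_image_Iic V) hzero
  rw [dsExcess_bot h₁ h₂] at hle
  rw [dsRank_eq_finrank_add_sInf]
  omega

theorem dsRank_lt_finrank_iff (h₁ : ρ₁ ⊥ = 0) (h₂ : ρ₂ ⊥ = 0) (V : Submodule Fq (E₁ × E₂)) :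
    dsRank ρ₁ ρ₂ V < finrank Fq V ↔ ∃ X ≤ V, memX ρ₁ ρ₂ X := by
  rw [dsRank_eq_finrank_add_sInf, add_lt_iff_neg_left,
    csInf_lt_iff (bddBelow_dsExcess_image_Iic V) ⟨_, ⊥, Set.mem_Iic.mpr bot_le, rfl⟩]
  simp only [Set.exists_mem_image, Set.mem_Iic, memX_iff_dsExcess_neg h₁ h₂]

end DirectSum

theorem stmt8_general (Fq E₁ E₂ : Type*) [Field Fq]
    [AddCommGroup E₁] [Module Fq E₁] [FiniteDimensional Fq E₁]
    [AddCommGroup E₂] [Module Fq E₂] [FiniteDimensional Fq E₂]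
    (ρ₁ : Submodule Fq E₁ → ℕ) (ρ₂ : Submodule Fq E₂ → ℕ)
    (hR1₁ : ∀ V : Submodule Fq E₁, ρ₁ V ≤ finrank Fq V)
    (hR1₂ : ∀ V : Submodule Fq E₂, ρ₂ V ≤ finrank Fq V) :
    ∀ C : Submodule Fq (E₁ × E₂),
      (dsRank ρ₁ ρ₂ C < (finrank Fq C : ℤ) ∧
        ∀ W : Submodule Fq (E₁ × E₂), W < C → dsRank ρ₁ ρ₂ W = (finrank Fq W : ℤ)) ↔
      (memX ρ₁ ρ₂ C ∧ ∀ X : Submodule Fq (E₁ × E₂), memX ρ₁ ρ₂ X → X ≤ C → X = C) := by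
  have h₁ : ρ₁ ⊥ = 0 := by simpa using hR1₁ ⊥
  have h₂ : ρ₂ ⊥ = 0 := by simpa using hR1₂ ⊥
  intro C
  have hindep (W : Submodule Fq (E₁ × E₂)) :
      dsRank ρ₁ ρ₂ W = finrank Fq W ↔ ¬ dsRank ρ₁ ρ₂ W < finrank Fq W :=
    by rw [(dsRank_le_finrank h₁ h₂ W).lt_iff_ne, not_not]
  calc _ ↔ Minimal (fun V ↦ dsRank ρ₁ ρ₂ V < finrank Fq V) C := by
        simp only [minimal_iff_forall_lt, hindep]
    _ ↔ Minimal (fun V ↦ ∃ X ≤ V, memX ρ₁ ρ₂ X) C := by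
        simp only [dsRank_lt_finrank_iff h₁ h₂]
    _ ↔ Minimal (memX ρ₁ ρ₂) C := minimal_exists_le_iff
    _ ↔ _ := by simp only [minimal_iff, eq_comm]

/-- The circuits of the direct sum `M₁ ⊕ M₂` (dependent spaces all of whose
proper subspaces are independent) are exactly the inclusion-minimal elements of `𝒳`. -/
theorem stmt8 (Fq E₁ E₂ : Type*) [Field Fq] [Fintype Fq]
    [AddCommGroup E₁] [Module Fq E₁] [FiniteDimensional Fq E₁]
    [AddCommGroup E₂] [Module Fq E₂] [FiniteDimensional Fq E₂]
    (ρ₁ : Submodule Fq E₁ → ℕ) (ρ₂ : Submodule Fq E₂ → ℕ)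
    (hR1₁ : ∀ V : Submodule Fq E₁, ρ₁ V ≤ finrank Fq V)
    (hR2₁ : ∀ V W : Submodule Fq E₁, V ≤ W → ρ₁ V ≤ ρ₁ W)
    (hR3₁ : ∀ V W : Submodule Fq E₁, ρ₁ (V ⊔ W) + ρ₁ (V ⊓ W) ≤ ρ₁ V + ρ₁ W)
    (hR1₂ : ∀ V : Submodule Fq E₂, ρ₂ V ≤ finrank Fq V)
    (hR2₂ : ∀ V W : Submodule Fq E₂, V ≤ W → ρ₂ V ≤ ρ₂ W)
    (hR3₂ : ∀ V W : Submodule Fq E₂, ρ₂ (V ⊔ W) + ρ₂ (V ⊓ W) ≤ ρ₂ V + ρ₂ W) :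
    ∀ C : Submodule Fq (E₁ × E₂),
      (dsRank ρ₁ ρ₂ C < (finrank Fq C : ℤ) ∧
        ∀ W : Submodule Fq (E₁ × E₂), W < C → dsRank ρ₁ ρ₂ W = (finrank Fq W : ℤ)) ↔
      (memX ρ₁ ρ₂ C ∧ ∀ X : Submodule Fq (E₁ × E₂), memX ρ₁ ρ₂ X → X ≤ C → X = C) :=
  stmt8_general Fq E₁ E₂ ρ₁ ρ₂ hR1₁ hR1₂
end

section
/- Let M_1 ⊕ M_2 = (E, ρ) be the direct sum of q-matroids M_i = (E_i, ρ_i). For all subspaces V_1 ≤ E_1 and V_2 ≤ E_2 one has ρ(V_1 ⊕ V_2) = ρ_1(V_1) + ρ_2(V_2). In particular, ρ(E) = ρ_1(E_1) + ρ_2(E_2), i.e. the rank of M_1 ⊕ M_2 equals the sum of the ranks of M_1 and M_2. -/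
/-!
A subspace `X ≤ V₁ ⊕ V₂` sits inside `π₁(X) ⊕ π₂(X)`, so `dim X ≤ dim π₁(X) + dim π₂(X)`.
Submodularity together with `ρ ≤ dim` gives local semimodularity `ρ(W) − ρ(U) ≤ dim W − dim U`
for `U ≤ W`; applied to `πᵢ(X) ≤ Vᵢ` this shows that the minimum defining `ρ(V₁ ⊕ V₂)` is
attained at `X = V₁ ⊕ V₂`, where its value is `ρ₁(V₁) + ρ₂(V₂) − dim V₁ − dim V₂`.
-/

open Module

namespace Submodule

variable {K M N : Type*} [Field K] [AddCommGroup M] [Module K M] [AddCommGroup N] [Module K N]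

theorem finrank_prod_eq [FiniteDimensional K M] [FiniteDimensional K N]
    (p : Submodule K M) (q : Submodule K N) :
    finrank K (p.prod q) = finrank K p + finrank K q := by
  have hdisj : p.map (LinearMap.inl K M N) ⊓ q.map (LinearMap.inr K M N) = ⊥ :=
    disjoint_iff.mp <|
      LinearMap.disjoint_inl_inr.mono LinearMap.map_le_range LinearMap.map_le_range
  have h := finrank_sup_add_finrank_inf_eq (p.map (LinearMap.inl K M N))
    (q.map (LinearMap.inr K M N))
  rwa [hdisj, finrank_bot, add_zero, ← LinearMap.prod_eq_sup_map,
    ← (p.equivMapOfInjective _ LinearMap.inl_injective).finrank_eq,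
    ← (q.equivMapOfInjective _ LinearMap.inr_injective).finrank_eq] at h

theorem le_prod_map_fst_map_snd (X : Submodule K (M × N)) :
    X ≤ (X.map (LinearMap.fst K M N)).prod (X.map (LinearMap.snd K M N)) :=
  fun x hx => ⟨⟨x, hx, rfl⟩, ⟨x, hx, rfl⟩⟩

end Submodule

theorem rank_add_finrank_le_of_le {K M : Type*} [Field K] [AddCommGroup M] [Module K M]
    [FiniteDimensional K M] (ρ : Submodule K M → ℕ)
    (hR1 : ∀ V : Submodule K M, ρ V ≤ finrank K V)
    (hR3 : ∀ V W : Submodule K M, ρ (V ⊔ W) + ρ (V ⊓ W) ≤ ρ V + ρ W)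
    {U W : Submodule K M} (hUW : U ≤ W) :
    ρ W + finrank K U ≤ ρ U + finrank K W := by
  obtain ⟨C, hdisj, hsup⟩ := IsModularLattice.exists_disjoint_and_sup_eq hUW
  have hdim : finrank K W = finrank K U + finrank K C := by
    rw [← hsup, ← Submodule.finrank_sup_add_finrank_inf_eq, disjoint_iff.mp hdisj,
      finrank_bot, add_zero]
  have hρ : ρ W ≤ ρ U + ρ C := by
    calc ρ W ≤ ρ (U ⊔ C) + ρ (U ⊓ C) := by rw [hsup]; exact Nat.le_add_right _ _
      _ ≤ ρ U + ρ C := hR3 U C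
  linarith [hR1 C]

section DirectSum

variable {K E₁ E₂ : Type*} [Field K]
    [AddCommGroup E₁] [Module K E₁] [FiniteDimensional K E₁]
    [AddCommGroup E₂] [Module K E₂] [FiniteDimensional K E₂]
    (ρ₁ : Submodule K E₁ → ℕ) (ρ₂ : Submodule K E₂ → ℕ)

theorem rank_add_rank_add_finrank_le
    (hR1₁ : ∀ V : Submodule K E₁, ρ₁ V ≤ finrank K V)
    (hR3₁ : ∀ V W : Submodule K E₁, ρ₁ (V ⊔ W) + ρ₁ (V ⊓ W) ≤ ρ₁ V + ρ₁ W)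
    (hR1₂ : ∀ V : Submodule K E₂, ρ₂ V ≤ finrank K V)
    (hR3₂ : ∀ V W : Submodule K E₂, ρ₂ (V ⊔ W) + ρ₂ (V ⊓ W) ≤ ρ₂ V + ρ₂ W)
    {V₁ : Submodule K E₁} {V₂ : Submodule K E₂} {X : Submodule K (E₁ × E₂)}
    (hX : X ≤ V₁.prod V₂) :
    ρ₁ V₁ + ρ₂ V₂ + finrank K X ≤
      ρ₁ (X.map (LinearMap.fst K E₁ E₂)) + ρ₂ (X.map (LinearMap.snd K E₁ E₂)) +
        finrank K (V₁.prod V₂) := by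
  set X₁ := X.map (LinearMap.fst K E₁ E₂)
  set X₂ := X.map (LinearMap.snd K E₁ E₂)
  have h₁ : ρ₁ V₁ + finrank K X₁ ≤ ρ₁ X₁ + finrank K V₁ :=
    rank_add_finrank_le_of_le ρ₁ hR1₁ hR3₁
      ((Submodule.map_mono hX).trans_eq (Submodule.prod_map_fst V₁ V₂))
  have h₂ : ρ₂ V₂ + finrank K X₂ ≤ ρ₂ X₂ + finrank K V₂ :=
    rank_add_finrank_le_of_le ρ₂ hR1₂ hR3₂
      ((Submodule.map_mono hX).trans_eq (Submodule.prod_map_snd V₁ V₂))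
  have hX_le : finrank K X ≤ finrank K X₁ + finrank K X₂ := by
    rw [← Submodule.finrank_prod_eq]
    exact Submodule.finrank_mono X.le_prod_map_fst_map_snd
  rw [Submodule.finrank_prod_eq]
  omega

theorem dsRank_prod
    (hR1₁ : ∀ V : Submodule K E₁, ρ₁ V ≤ finrank K V)
    (hR3₁ : ∀ V W : Submodule K E₁, ρ₁ (V ⊔ W) + ρ₁ (V ⊓ W) ≤ ρ₁ V + ρ₁ W)
    (hR1₂ : ∀ V : Submodule K E₂, ρ₂ V ≤ finrank K V)
    (hR3₂ : ∀ V W : Submodule K E₂, ρ₂ (V ⊔ W) + ρ₂ (V ⊓ W) ≤ ρ₂ V + ρ₂ W)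
    (V₁ : Submodule K E₁) (V₂ : Submodule K E₂) :
    dsRank ρ₁ ρ₂ (V₁.prod V₂) = (ρ₁ V₁ : ℤ) + (ρ₂ V₂ : ℤ) := by
  have hleast : IsLeast {z : ℤ | ∃ X : Submodule K (E₁ × E₂), X ≤ V₁.prod V₂ ∧
      z = (ρ₁ (X.map (LinearMap.fst K E₁ E₂)) : ℤ) + (ρ₂ (X.map (LinearMap.snd K E₁ E₂)) : ℤ)
        - (finrank K X : ℤ)}
      ((ρ₁ V₁ : ℤ) + (ρ₂ V₂ : ℤ) - (finrank K (V₁.prod V₂) : ℤ)) := by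
    refine ⟨⟨V₁.prod V₂, le_rfl, ?_⟩, ?_⟩
    · rw [Submodule.prod_map_fst, Submodule.prod_map_snd]
    · rintro z ⟨X, hX, rfl⟩
      have := rank_add_rank_add_finrank_le ρ₁ ρ₂ hR1₁ hR3₁ hR1₂ hR3₂ hX
      omega
  rw [dsRank, hleast.csInf_eq]
  ring

end DirectSum

theorem stmt9_general (Fq E₁ E₂ : Type*) [Field Fq]
    [AddCommGroup E₁] [Module Fq E₁] [FiniteDimensional Fq E₁]
    [AddCommGroup E₂] [Module Fq E₂] [FiniteDimensional Fq E₂]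
    (ρ₁ : Submodule Fq E₁ → ℕ) (ρ₂ : Submodule Fq E₂ → ℕ)
    (hR1₁ : ∀ V : Submodule Fq E₁, ρ₁ V ≤ finrank Fq V)
    (hR3₁ : ∀ V W : Submodule Fq E₁, ρ₁ (V ⊔ W) + ρ₁ (V ⊓ W) ≤ ρ₁ V + ρ₁ W)
    (hR1₂ : ∀ V : Submodule Fq E₂, ρ₂ V ≤ finrank Fq V)
    (hR3₂ : ∀ V W : Submodule Fq E₂, ρ₂ (V ⊔ W) + ρ₂ (V ⊓ W) ≤ ρ₂ V + ρ₂ W) :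
    (∀ (V₁ : Submodule Fq E₁) (V₂ : Submodule Fq E₂),
        dsRank ρ₁ ρ₂ (V₁.prod V₂) = (ρ₁ V₁ : ℤ) + (ρ₂ V₂ : ℤ)) ∧
    dsRank ρ₁ ρ₂ ⊤ = (ρ₁ ⊤ : ℤ) + (ρ₂ ⊤ : ℤ) := by
  have h := dsRank_prod ρ₁ ρ₂ hR1₁ hR3₁ hR1₂ hR3₂
  exact ⟨h, by rw [← Submodule.prod_top]; exact h ⊤ ⊤⟩

/-- In the direct sum `M₁ ⊕ M₂ = (E, ρ)` one has
`ρ(V₁ ⊕ V₂) = ρ₁(V₁) + ρ₂(V₂)` for all `V₁ ≤ E₁`, `V₂ ≤ E₂`; in particular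
`ρ(E) = ρ₁(E₁) + ρ₂(E₂)`. -/
theorem stmt9 (Fq E₁ E₂ : Type*) [Field Fq] [Fintype Fq]
    [AddCommGroup E₁] [Module Fq E₁] [FiniteDimensional Fq E₁]
    [AddCommGroup E₂] [Module Fq E₂] [FiniteDimensional Fq E₂]
    (ρ₁ : Submodule Fq E₁ → ℕ) (ρ₂ : Submodule Fq E₂ → ℕ)
    (hR1₁ : ∀ V : Submodule Fq E₁, ρ₁ V ≤ finrank Fq V)
    (hR2₁ : ∀ V W : Submodule Fq E₁, V ≤ W → ρ₁ V ≤ ρ₁ W)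
    (hR3₁ : ∀ V W : Submodule Fq E₁, ρ₁ (V ⊔ W) + ρ₁ (V ⊓ W) ≤ ρ₁ V + ρ₁ W)
    (hR1₂ : ∀ V : Submodule Fq E₂, ρ₂ V ≤ finrank Fq V)
    (hR2₂ : ∀ V W : Submodule Fq E₂, V ≤ W → ρ₂ V ≤ ρ₂ W)
    (hR3₂ : ∀ V W : Submodule Fq E₂, ρ₂ (V ⊔ W) + ρ₂ (V ⊓ W) ≤ ρ₂ V + ρ₂ W) :
    (∀ (V₁ : Submodule Fq E₁) (V₂ : Submodule Fq E₂),
        dsRank ρ₁ ρ₂ (V₁.prod V₂) = (ρ₁ V₁ : ℤ) + (ρ₂ V₂ : ℤ)) ∧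
    dsRank ρ₁ ρ₂ ⊤ = (ρ₁ ⊤ : ℤ) + (ρ₂ ⊤ : ℤ) :=
  stmt9_general Fq E₁ E₂ ρ₁ ρ₂ hR1₁ hR3₁ hR1₂ hR3₂
end

section
/- Let 1 ≤ k < n and let 𝒮 be a collection of k-dimensional 𝔽_q-subspaces of 𝔽_q^n such that dim(X ∩ Y) ≤ k − 2 for all distinct X, Y ∈ 𝒮. Define ρ(V) = k − 1 if V ∈ 𝒮 and ρ(V) = min(k, dim V) otherwise. Then (𝔽_q^n, ρ) is a q-matroid of rank k, its circuits are exactly the spaces in 𝒮 together with all (k+1)-dimensional subspaces containing no member of 𝒮, and it is paving. -/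
/-!
The rank function is `min k (dim ·)` lowered by one on the members of `𝒮`. Truncation
`min k (dim ·)` is submodular because `dim` is modular and `min k` is concave. Lowering the
rank of `X ∈ 𝒮` keeps it submodular: an incomparable partner `W` of `X` has
`dim (X ∩ W) < k`, which leaves a unit of slack in `ρ (X + W) + ρ (X ∩ W) ≤ ρ X + ρ W`,
except when `W ∈ 𝒮` too, where `dim (X ∩ W) ≤ k - 2` provides the two units needed.
A space is then independent exactly when it has dimension at most `k` and is not in `𝒮`,
from which the circuits can be read off.
-/

open Module

theorem Submodule.exists_le_finrank_eq {K V : Type*} [DivisionRing K] [AddCommGroup V]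
    [Module K V] [FiniteDimensional K V] (C : Submodule K V) {m : ℕ} (hm : m ≤ finrank K C) :
    ∃ W ≤ C, finrank K W = m := by
  let b := finBasis K C
  let v : Fin m → V := fun i => b (Fin.castLE hm i)
  have hv : LinearIndependent K v :=
    (b.linearIndependent.comp _ (Fin.castLE_injective hm)).map' C.subtype C.ker_subtype
  refine ⟨span K (Set.range v), ?_, by rw [finrank_span_eq_card hv, Fintype.card_fin]⟩
  rw [span_le]
  rintro _ ⟨i, rfl⟩
  exact (b (Fin.castLE hm i)).2

namespace QMatroid

variable {K V : Type*} [DivisionRing K] [AddCommGroup V] [Module K V]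

def IsCircuit (r : Submodule K V → ℕ) (C : Submodule K V) : Prop :=
  r C < finrank K C ∧ ∀ W < C, r W = finrank K W

open Classical in
noncomputable def pavingRank (S : Set (Submodule K V)) (k : ℕ) (W : Submodule K V) : ℕ :=
  if W ∈ S then k - 1 else min k (finrank K W)

variable {S : Set (Submodule K V)} {k : ℕ} {W X : Submodule K V}

theorem pavingRank_of_mem (h : W ∈ S) : pavingRank S k W = k - 1 := by
  simp [pavingRank, h]

theorem pavingRank_of_notMem (h : W ∉ S) : pavingRank S k W = min k (finrank K W) := by
  simp [pavingRank, h]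

section

variable (hSdim : ∀ X ∈ S, finrank K X = k)
include hSdim

theorem notMem_of_finrank_ne (h : finrank K W ≠ k) : W ∉ S :=
  fun hW => h (hSdim W hW)

theorem pavingRank_le_min (W : Submodule K V) : pavingRank S k W ≤ min k (finrank K W) := by
  by_cases hW : W ∈ S
  · rw [pavingRank_of_mem hW, hSdim W hW]
    omega
  · rw [pavingRank_of_notMem hW]

theorem pavingRank_of_finrank_lt (h : finrank K W < k) : pavingRank S k W = finrank K W := by
  rw [pavingRank_of_notMem (notMem_of_finrank_ne hSdim h.ne)]
  omega

theorem pavingRank_eq_finrank_iff (hk : 1 ≤ k) :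
    pavingRank S k W = finrank K W ↔ W ∉ S ∧ finrank K W ≤ k := by
  by_cases hW : W ∈ S
  · rw [pavingRank_of_mem hW, hSdim W hW]
    simp only [hW, not_true_eq_false, false_and, iff_false]
    omega
  · rw [pavingRank_of_notMem hW]
    simpa only [hW, not_false_eq_true, true_and] using min_eq_right_iff

variable [FiniteDimensional K V]

theorem pavingRank_mono {W₁ W₂ : Submodule K V} (h : W₁ ≤ W₂) :
    pavingRank S k W₁ ≤ pavingRank S k W₂ := by
  by_cases hW₂ : W₂ ∈ S
  · rcases h.lt_or_eq with hlt | rfl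
    · have hdim := hSdim W₂ hW₂ ▸ Submodule.finrank_lt_finrank_of_lt hlt
      rw [pavingRank_of_finrank_lt hSdim hdim, pavingRank_of_mem hW₂]
      omega
    · rfl
  · rw [pavingRank_of_notMem hW₂]
    exact (pavingRank_le_min hSdim W₁).trans
      (min_le_min_left k (Submodule.finrank_mono h))

theorem pavingRank_sup_add_inf_le_of_mem
    (hSint : ∀ X ∈ S, ∀ Y ∈ S, X ≠ Y → (finrank K ↥(X ⊓ Y) : ℤ) ≤ (k : ℤ) - 2)
    (hX : X ∈ S) (W : Submodule K V) :
    pavingRank S k (X ⊔ W) + pavingRank S k (X ⊓ W) ≤ pavingRank S k X + pavingRank S k W := by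
  by_cases hXW : X ≤ W
  · rw [sup_eq_right.2 hXW, inf_eq_left.2 hXW, add_comm]
  by_cases hWX : W ≤ X
  · rw [sup_eq_left.2 hWX, inf_eq_right.2 hWX]
  have hinf : finrank K ↥(X ⊓ W) < k :=
    hSdim X hX ▸ Submodule.finrank_lt_finrank_of_lt (inf_lt_left.2 hXW)
  have hsup := (pavingRank_le_min hSdim (X ⊔ W)).trans (min_le_left _ _)
  rw [pavingRank_of_finrank_lt hSdim hinf, pavingRank_of_mem hX]
  by_cases hW : W ∈ S
  · have := hSint X hX W hW (fun h => hXW h.le)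
    rw [pavingRank_of_mem hW]
    omega
  have := Submodule.finrank_lt_finrank_of_lt (inf_lt_right.2 hWX)
  rw [pavingRank_of_notMem hW]
  omega

end

variable [FiniteDimensional K V]

theorem min_finrank_sup_add_inf_le (k : ℕ) (V₁ V₂ : Submodule K V) :
    min k (finrank K ↥(V₁ ⊔ V₂)) + min k (finrank K ↥(V₁ ⊓ V₂)) ≤
      min k (finrank K V₁) + min k (finrank K V₂) := by
  have := Submodule.finrank_sup_add_finrank_inf_eq V₁ V₂
  have := Submodule.finrank_mono (inf_le_left : V₁ ⊓ V₂ ≤ V₁)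
  have := Submodule.finrank_mono (inf_le_right : V₁ ⊓ V₂ ≤ V₂)
  omega

theorem pavingRank_sup_add_inf_le (hSdim : ∀ X ∈ S, finrank K X = k)
    (hSint : ∀ X ∈ S, ∀ Y ∈ S, X ≠ Y → (finrank K ↥(X ⊓ Y) : ℤ) ≤ (k : ℤ) - 2)
    (V₁ V₂ : Submodule K V) :
    pavingRank S k (V₁ ⊔ V₂) + pavingRank S k (V₁ ⊓ V₂) ≤
      pavingRank S k V₁ + pavingRank S k V₂ := by
  by_cases h₁ : V₁ ∈ S
  · exact pavingRank_sup_add_inf_le_of_mem hSdim hSint h₁ V₂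
  by_cases h₂ : V₂ ∈ S
  · rw [sup_comm, inf_comm, add_comm (pavingRank S k V₁)]
    exact pavingRank_sup_add_inf_le_of_mem hSdim hSint h₂ V₁
  rw [pavingRank_of_notMem h₁, pavingRank_of_notMem h₂]
  exact (add_le_add (pavingRank_le_min hSdim _) (pavingRank_le_min hSdim _)).trans
    (min_finrank_sup_add_inf_le k V₁ V₂)

theorem isCircuit_pavingRank_iff (hk : 1 ≤ k) (hSdim : ∀ X ∈ S, finrank K X = k)
    (C : Submodule K V) :
    IsCircuit (pavingRank S k) C ↔ C ∈ S ∨ (finrank K C = k + 1 ∧ ∀ X ∈ S, ¬ X ≤ C) := by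
  have hindep (W : Submodule K V) :
      pavingRank S k W = finrank K W ↔ W ∉ S ∧ finrank K W ≤ k :=
    pavingRank_eq_finrank_iff hSdim hk
  have hdep : pavingRank S k C < finrank K C ↔ C ∈ S ∨ k < finrank K C := by
    rw [((pavingRank_le_min hSdim C).trans (min_le_right _ _)).lt_iff_ne, Ne, hindep,
      not_and_or, not_not, not_le]
  simp only [IsCircuit, hdep, hindep]
  constructor
  · rintro ⟨hC | hkC, hsub⟩
    · exact Or.inl hC
    obtain ⟨W, hWC, hW⟩ := C.exists_le_finrank_eq hkC
    obtain rfl : C = W := by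
      by_contra hne
      have := (hsub W (hWC.lt_of_ne (Ne.symm hne))).2
      omega
    refine Or.inr ⟨hW, fun X hX hXC => (hsub X (hXC.lt_of_ne fun h => ?_)).1 hX⟩
    have := hSdim X hX
    subst h
    omega
  · rintro (hC | ⟨hC, hnoX⟩)
    · refine ⟨Or.inl hC, fun W hW => ?_⟩
      have := hSdim C hC ▸ Submodule.finrank_lt_finrank_of_lt hW
      exact ⟨notMem_of_finrank_ne hSdim this.ne, this.le⟩
    · refine ⟨Or.inr (by omega), fun W hW => ⟨fun hWS => hnoX W hWS hW.le, ?_⟩⟩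
      have := Submodule.finrank_lt_finrank_of_lt hW
      omega

end QMatroid

open QMatroid in
theorem stmt10_general (Fq : Type*) [Field Fq] (n k : ℕ) (hk : 1 ≤ k) (hkn : k < n)
    (S : Set (Submodule Fq (Fin n → Fq)))
    (hSdim : ∀ X ∈ S, finrank Fq X = k)
    (hSint : ∀ X ∈ S, ∀ Y ∈ S, X ≠ Y → (finrank Fq ↥(X ⊓ Y) : ℤ) ≤ (k : ℤ) - 2)
    (ρ : Submodule Fq (Fin n → Fq) → ℕ)
    (hρS : ∀ V ∈ S, ρ V = k - 1)
    (hρ : ∀ V ∉ S, ρ V = min k (finrank Fq V)) :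
    ((∀ V : Submodule Fq (Fin n → Fq), ρ V ≤ finrank Fq V) ∧
     (∀ V W : Submodule Fq (Fin n → Fq), V ≤ W → ρ V ≤ ρ W) ∧
     (∀ V W : Submodule Fq (Fin n → Fq), ρ (V ⊔ W) + ρ (V ⊓ W) ≤ ρ V + ρ W)) ∧
    ρ ⊤ = k ∧
    (∀ C : Submodule Fq (Fin n → Fq),
      (ρ C < finrank Fq C ∧ ∀ W : Submodule Fq (Fin n → Fq), W < C → ρ W = finrank Fq W) ↔
        (C ∈ S ∨ (finrank Fq C = k + 1 ∧ ∀ X ∈ S, ¬ X ≤ C))) ∧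
    (∀ C : Submodule Fq (Fin n → Fq),
      (ρ C < finrank Fq C ∧ ∀ W : Submodule Fq (Fin n → Fq), W < C → ρ W = finrank Fq W) →
        k ≤ finrank Fq C) := by
  obtain rfl : ρ = pavingRank S k := funext fun V => by
    by_cases hV : V ∈ S
    · rw [hρS V hV, pavingRank_of_mem hV]
    · rw [hρ V hV, pavingRank_of_notMem hV]
  have hcircuit := isCircuit_pavingRank_iff hk hSdim
  have htop : finrank Fq (⊤ : Submodule Fq (Fin n → Fq)) = n := by simp
  refine ⟨⟨fun V => (pavingRank_le_min hSdim V).trans (min_le_right _ _),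
    fun _ _ => pavingRank_mono hSdim, pavingRank_sup_add_inf_le hSdim hSint⟩, ?_, hcircuit,
    fun C hC => ?_⟩
  · rw [pavingRank_of_notMem (notMem_of_finrank_ne hSdim (by omega)), htop]
    omega
  · rcases (hcircuit C).1 hC with hC | ⟨hC, -⟩
    · exact (hSdim C hC).ge
    · omega

/-- Let `1 ≤ k < n` and let `𝒮` be a collection of `k`-dimensional
subspaces of `𝔽_q^n` with `dim(X ∩ Y) ≤ k − 2` for distinct `X, Y ∈ 𝒮`. Define
`ρ(V) = k − 1` for `V ∈ 𝒮` and `ρ(V) = min(k, dim V)` otherwise. Then `(𝔽_q^n, ρ)` is a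
q-matroid of rank `k`, its circuits are exactly the members of `𝒮` together with the
`(k+1)`-dimensional spaces containing no member of `𝒮`, and it is paving. -/
theorem stmt10 (Fq : Type*) [Field Fq] [Fintype Fq] (n k : ℕ) (hk : 1 ≤ k) (hkn : k < n)
    (S : Set (Submodule Fq (Fin n → Fq)))
    (hSdim : ∀ X ∈ S, finrank Fq X = k)
    (hSint : ∀ X ∈ S, ∀ Y ∈ S, X ≠ Y → (finrank Fq ↥(X ⊓ Y) : ℤ) ≤ (k : ℤ) - 2)
    (ρ : Submodule Fq (Fin n → Fq) → ℕ)
    (hρS : ∀ V ∈ S, ρ V = k - 1)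
    (hρ : ∀ V ∉ S, ρ V = min k (finrank Fq V)) :
    ((∀ V : Submodule Fq (Fin n → Fq), ρ V ≤ finrank Fq V) ∧
     (∀ V W : Submodule Fq (Fin n → Fq), V ≤ W → ρ V ≤ ρ W) ∧
     (∀ V W : Submodule Fq (Fin n → Fq), ρ (V ⊔ W) + ρ (V ⊓ W) ≤ ρ V + ρ W)) ∧
    ρ ⊤ = k ∧
    (∀ C : Submodule Fq (Fin n → Fq),
      (ρ C < finrank Fq C ∧ ∀ W : Submodule Fq (Fin n → Fq), W < C → ρ W = finrank Fq W) ↔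
        (C ∈ S ∨ (finrank Fq C = k + 1 ∧ ∀ X ∈ S, ¬ X ≤ C))) ∧
    (∀ C : Submodule Fq (Fin n → Fq),
      (ρ C < finrank Fq C ∧ ∀ W : Submodule Fq (Fin n → Fq), W < C → ρ W = finrank Fq W) →
        k ≤ finrank Fq C) :=
  stmt10_general Fq n k hk hkn S hSdim hSint ρ hρS hρ
end

section
/- Let 𝔽_4 = {0, 1, ω, ω+1} ⊆ 𝔽_{2^m} where ω² = ω + 1 (so m is even whenever such ω exists in 𝔽_{2^m}), and let G_1 = [[1, ω, 0, ω+1], [0, 0, 1, ω]]. If H ∈ 𝔽_{2^m}^{2×4} is a matrix in reduced row echelon form with M_H = M_{G_1} (as q-matroids on 𝔽_2^4), then H = [[1, β, 0, β²], [0, 0, 1, β]] for some β ∈ 𝔽_{2^m} with β² + β + 1 = 0; that is, H equals G_1 or the matrix obtained from G_1 by replacing ω with ω + 1. -/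
/-!
Only the bases of the q-matroid are needed: for a `2`-row `Y`, `ρ(V) = 2` iff `det (H Yᵀ) ≠ 0`,
so `H` and `G₁` have the same vanishing "minors" `det (· Yᵀ)`. Since `⟨e₀, e₂⟩` is a basis of
`M_{G₁}` and `⟨e₀, e₁⟩` is not, the RREF matrix `H` has pivot columns `0` and `2`, i.e.
`H = [[1, b, 0, d], [0, 0, 1, f]]`. The subspaces `⟨e₂, e₀ + e₁ + e₃⟩`, `⟨e₀ + e₂, e₂ + e₃⟩` and
`⟨e₁ + e₃, e₀ + e₂ + e₃⟩` are not bases of `M_{G₁}`, which gives, in characteristic `2`,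
`d = b + 1`, `f = d + 1` and `b² + b + 1 = 0`.
-/

open Module Matrix

/-- A matrix is in reduced row echelon form (RREF): zero rows are at the bottom, and the
leading (first nonzero) entry of each nonzero row equals `1`, is the only nonzero entry in
its column, and lies strictly to the left of every nonzero entry of any later row. -/
def IsRREF {K : Type*} [Field K] {k n : ℕ} (H : Matrix (Fin k) (Fin n) K) : Prop :=
  (∀ i i' : Fin k, i ≤ i' → (∀ j, H i j = 0) → ∀ j, H i' j = 0) ∧
  (∀ (i : Fin k) (j : Fin n), H i j ≠ 0 → (∀ j' < j, H i j' = 0) →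
    H i j = 1 ∧ (∀ i' ≠ i, H i' j = 0) ∧
      ∀ (i' : Fin k) (j'' : Fin n), i < i' → H i' j'' ≠ 0 → j < j'')

theorem Matrix.rank_eq_card_iff_det_ne_zero {K m : Type*} [Field K] [Fintype m] [DecidableEq m]
    (A : Matrix m m K) : A.rank = Fintype.card m ↔ A.det ≠ 0 := by
  rw [rank_eq_finrank_span_cols, eq_comm, ← Set.finrank,
    ← linearIndependent_iff_card_eq_finrank_span, linearIndependent_cols_iff_isUnit,
    isUnit_iff_isUnit_det, isUnit_iff_ne_zero]

theorem Matrix.det_eq_zero_iff_of_rank_eq {K m : Type*} [Field K] [Fintype m] [DecidableEq m]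
    {A B : Matrix m m K} (h : A.rank = B.rank) : A.det = 0 ↔ B.det = 0 := by
  rw [← not_iff_not, ← ne_eq, ← ne_eq, ← rank_eq_card_iff_det_ne_zero,
    ← rank_eq_card_iff_det_ne_zero, h]

theorem IsRREF.apply_zero_eq_zero {K : Type*} [Field K] {k n : ℕ}
    {H : Matrix (Fin k) (Fin (n + 1)) K} (hH : IsRREF H) {i i' : Fin k} (hi : i < i') :
    H i' 0 = 0 := by
  by_contra hne
  have hrow : ∃ j, H i j ≠ 0 := by
    by_contra! hzero
    exact hne (hH.1 i i' hi.le hzero 0)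
  obtain ⟨j, hj, hmin⟩ := wellFounded_lt.has_min {j | H i j ≠ 0} hrow
  have hleft : ∀ j' < j, H i j' = 0 := fun j' hj' => by_contra fun h => hmin j' h hj'
  exact Fin.not_lt_zero j ((hH.2 i j hj hleft).2.2 i' 0 hi hne)

/-- For `k`-row `A` and `Y`, `qMinor F A Y ≠ 0` iff `ρ_A(V) = k` for the row space `V` of `Y`,
i.e. iff `V` is a basis of the q-matroid `M_A`. -/
def qMinor (F : Type*) {K : Type*} [CommSemiring F] [CommRing K] [Algebra F K] {k n : ℕ}
    (A : Matrix (Fin k) (Fin n) K) (Y : Matrix (Fin k) (Fin n) F) : K :=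
  (A * (Y.map (algebraMap F K))ᵀ).det

theorem qMinor_fin_two {F K : Type*} [CommSemiring F] [CommRing K] [Algebra F K] {n : ℕ}
    (A : Matrix (Fin 2) (Fin n) K) (Y : Matrix (Fin 2) (Fin n) F) :
    qMinor F A Y =
      (∑ j, A 0 j * algebraMap F K (Y 0 j)) * (∑ j, A 1 j * algebraMap F K (Y 1 j)) -
        (∑ j, A 0 j * algebraMap F K (Y 1 j)) * (∑ j, A 1 j * algebraMap F K (Y 0 j)) := by
  simp [qMinor, det_fin_two, mul_apply]

def SameQBases (F : Type*) {K : Type*} [CommSemiring F] [CommRing K] [Algebra F K] {k n : ℕ}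
    (A B : Matrix (Fin k) (Fin n) K) : Prop :=
  ∀ Y : Matrix (Fin k) (Fin n) F, qMinor F A Y = 0 ↔ qMinor F B Y = 0

theorem sameQBases_of_rank_eq {F K : Type*} [CommSemiring F] [Field K] [Algebra F K] {k n : ℕ}
    {A B : Matrix (Fin k) (Fin n) K}
    (h : ∀ Y : Matrix (Fin k) (Fin n) F,
      (A * (Y.map (algebraMap F K))ᵀ).rank = (B * (Y.map (algebraMap F K))ᵀ).rank) :
    SameQBases F A B :=
  fun Y => det_eq_zero_iff_of_rank_eq (h Y)

/-- The general `2 × 4` matrix in reduced row echelon form with pivot columns `0` and `2`. -/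
def echelon02 {K : Type*} [Zero K] [One K] (b d f : K) : Matrix (Fin 2) (Fin 4) K :=
  !![1, b, 0, d; 0, 0, 1, f]

theorem IsRREF.eq_echelon02 {F K : Type*} [CommSemiring F] [Field K] [Algebra F K]
    {H : Matrix (Fin 2) (Fin 4) K} (hH : IsRREF H) {b d f : K}
    (h : SameQBases F H (echelon02 b d f)) : H = echelon02 (H 0 1) (H 0 3) (H 1 3) := by
  have h₁₀ : H 1 0 = 0 := hH.apply_zero_eq_zero (show (0 : Fin 2) < 1 by decide)
  obtain ⟨h₀₀, h₁₂⟩ : H 0 0 ≠ 0 ∧ H 1 2 ≠ 0 := by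
    simpa [qMinor_fin_two, echelon02, Fin.sum_univ_four, h₁₀]
      using h !![1, 0, 0, 0; 0, 0, 1, 0]
  have h₁₁ : H 1 1 = 0 := by
    simpa [qMinor_fin_two, echelon02, Fin.sum_univ_four, h₁₀, h₀₀]
      using h !![1, 0, 0, 0; 0, 1, 0, 0]
  obtain ⟨hpivot₀, -, -⟩ := hH.2 0 0 h₀₀ fun j hj => absurd hj (Fin.not_lt_zero j)
  obtain ⟨hpivot₁, habove₁, -⟩ := hH.2 1 2 h₁₂ fun j hj => by
    fin_cases j <;> first | assumption | exact absurd hj (by decide)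
  have h₀₂ : H 0 2 = 0 := habove₁ 0 (by decide)
  ext i j
  fin_cases i <;> fin_cases j <;> simp [echelon02, hpivot₀, hpivot₁, h₀₂, h₁₀, h₁₁]

theorem SameQBases.echelon02_eq {K : Type*} [CommRing K] [Algebra (ZMod 2) K] {b d f c : K}
    (h : SameQBases (ZMod 2) (echelon02 b d f) (echelon02 c (c + 1) c)) (hc : c ^ 2 = c + 1) :
    b ^ 2 + b + 1 = 0 ∧ echelon02 b d f = echelon02 b (b ^ 2) b := by
  have h2 : (2 : K) = 0 := by
    have := map_ofNat (algebraMap (ZMod 2) K) 2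
    rwa [show (OfNat.ofNat 2 : ZMod 2) = 0 from rfl, map_zero, eq_comm] at this
  have e₁ : 1 + b + d = 0 ↔ 1 + c + (c + 1) = 0 := by
    simpa [qMinor_fin_two, echelon02, Fin.sum_univ_four, -neg_add_rev]
      using h !![0, 0, 1, 0; 1, 1, 0, 1]
  have e₂ : 1 + f - d = 0 ↔ 1 + c - (c + 1) = 0 := by
    simpa [qMinor_fin_two, echelon02, Fin.sum_univ_four]
      using h !![1, 0, 1, 0; 0, 0, 1, 1]
  have e₃ : (b + d) * (1 + f) - (1 + d) * f = 0 ↔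
      (c + (c + 1)) * (1 + c) - (1 + (c + 1)) * c = 0 := by
    simpa [qMinor_fin_two, echelon02, Fin.sum_univ_four]
      using h !![0, 1, 0, 1; 1, 0, 1, 1]
  have hd : d = -1 - b := by linear_combination e₁.mpr (by linear_combination (1 + c) * h2)
  have hf : f = d - 1 := by linear_combination e₂.mpr (by ring)
  rw [hf, hd] at e₃
  have hb : b ^ 2 + b + 1 = 0 := by
    linear_combination -e₃.mpr (by linear_combination hc + (c + 1) * h2) + h2
  rw [show d = b ^ 2 by linear_combination hd - hb,
    show f = b by linear_combination hf + hd - (1 + b) * h2]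
  exact ⟨hb, rfl⟩

theorem stmt15_general (K : Type*) [Field K] [Algebra (ZMod 2) K]
    (ω : K) (hω : ω ^ 2 = ω + 1)
    (H : Matrix (Fin 2) (Fin 4) K) (hRREF : IsRREF H)
    (hrep : ∀ (y : ℕ) (Y : Matrix (Fin y) (Fin 4) (ZMod 2)),
      (H * (Y.map (algebraMap (ZMod 2) K))ᵀ).rank =
        (!![1, ω, 0, ω + 1; 0, 0, 1, ω] * (Y.map (algebraMap (ZMod 2) K))ᵀ).rank) :
    ∃ β : K, β ^ 2 + β + 1 = 0 ∧ H = !![1, β, 0, β ^ 2; 0, 0, 1, β] := by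
  have hbases : SameQBases (ZMod 2) H (echelon02 ω (ω + 1) ω) := sameQBases_of_rank_eq (hrep 2)
  have hH := hRREF.eq_echelon02 hbases
  rw [hH] at hbases
  obtain ⟨hβ, hE⟩ := hbases.echelon02_eq hω
  exact ⟨H 0 1, hβ, hH.trans hE⟩

/-- Let `ω ∈ 𝔽_{2^m}` with `ω² = ω + 1` (so `𝔽₄ ⊆ 𝔽_{2^m}`) and
`G₁ = [[1, ω, 0, ω+1], [0, 0, 1, ω]]`. If `H ∈ 𝔽_{2^m}^{2×4}` is in reduced row echelon
form and `M_H = M_{G₁}` as q-matroids on `𝔽₂⁴`, then `H = [[1, β, 0, β²], [0, 0, 1, β]]`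
for some `β` with `β² + β + 1 = 0`; i.e. `H` is obtained from `G₁` with `ω` replaced by
`ω` or `ω + 1`. -/
theorem stmt15 (K : Type*) [Field K] [Fintype K] [Algebra (ZMod 2) K]
    (ω : K) (hω : ω ^ 2 = ω + 1)
    (H : Matrix (Fin 2) (Fin 4) K) (hRREF : IsRREF H)
    (hrep : ∀ (y : ℕ) (Y : Matrix (Fin y) (Fin 4) (ZMod 2)),
      (H * (Y.map (algebraMap (ZMod 2) K))ᵀ).rank =
        (!![1, ω, 0, ω + 1; 0, 0, 1, ω] * (Y.map (algebraMap (ZMod 2) K))ᵀ).rank) :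
    ∃ β : K, β ^ 2 + β + 1 = 0 ∧ H = !![1, β, 0, β ^ 2; 0, 0, 1, β] :=
  stmt15_general K ω hω H hRREF hrep
end
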